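/- arXiv:1109.1352 — 10 statements merged into one kernel-verified Lean document; each statement's English description precedes it below -/
import Mathlib

section
/- For any real numbers a, b and any ε > 0, there exist positive reals a_0, b_0 with a_0 + b_0 < ε such that a ∧ b = a_0 ∧ b_0 in ℝ ⊗_ℚ ℝ, where x ∧ y denotes x ⊗ y − y ⊗ x. -/
open scoped TensorProduct

/-- Density lemma: shift `x` by a rational multiple of a nonzero `c` into `(u,v)`. -/
lemma exists_rat_shift (x c u v : ℝ) (hc : c ≠ 0) (huv : u < v) :
    ∃ q : ℚ, u < x + q * c ∧ x + q * c < v := by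
  rcases hc.lt_or_gt with h | h
  · obtain ⟨q, h1, h2⟩ := exists_rat_btwn
      (div_lt_div_of_neg_of_lt h (by linarith : u - x < v - x))
    refine ⟨q, ?_, ?_⟩
    · nlinarith [(lt_div_iff_of_neg h).mp h2]
    · nlinarith [(div_lt_iff_of_neg h).mp h1]
  · obtain ⟨q, h1, h2⟩ := exists_rat_btwn
      (div_lt_div_of_pos_right (by linarith : u - x < v - x) h)
    refine ⟨q, ?_, ?_⟩
    · nlinarith [(div_lt_iff₀ h).mp h1]
    · nlinarith [(lt_div_iff₀ h).mp h2]

/-- invariance of the wedge under a rational shear. -/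
lemma wedge_shear (x y : ℝ) (q : ℚ) :
    (x ⊗ₜ[ℚ] (y + (q:ℝ) * x) - (y + (q:ℝ) * x) ⊗ₜ[ℚ] x : ℝ ⊗[ℚ] ℝ)
      = x ⊗ₜ[ℚ] y - y ⊗ₜ[ℚ] x := by
  rw [show (q:ℝ) * x = q • x from (Rat.smul_def q x).symm]
  simp [TensorProduct.tmul_add, TensorProduct.add_tmul, TensorProduct.tmul_smul,
    TensorProduct.smul_tmul']

/-- For any reals `a, b` and `ε > 0` there exist positive reals `a₀, b₀` with
`a₀ + b₀ < ε` such that `a ∧ b = a₀ ∧ b₀` in `ℝ ⊗[ℚ] ℝ`. -/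
theorem wedge_small_representative (a b ε : ℝ) (hε : 0 < ε) :
    ∃ a₀ b₀ : ℝ, 0 < a₀ ∧ 0 < b₀ ∧ a₀ + b₀ < ε ∧
      (a ⊗ₜ[ℚ] b - b ⊗ₜ[ℚ] a : ℝ ⊗[ℚ] ℝ) = a₀ ⊗ₜ[ℚ] b₀ - b₀ ⊗ₜ[ℚ] a₀ := by
  by_cases ha : a = 0
  · refine ⟨ε/3, ε/3, by positivity, by positivity, by linarith, ?_⟩
    simp [ha]
  · obtain ⟨r, hr1, hr2⟩ := exists_rat_shift b a 0 (ε/2) ha (by positivity)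
    have hb₀ne : b + ↑r * a ≠ 0 := ne_of_gt hr1
    obtain ⟨s, hs1, hs2⟩ := exists_rat_shift a (b + ↑r * a) 0 (ε/2) hb₀ne (by positivity)
    set b₀ := b + ↑r * a with hb₀
    clear_value b₀
    refine ⟨a + ↑s * b₀, b₀, hs1, hr1, by linarith, ?_⟩
    have h1 : (a ⊗ₜ[ℚ] b₀ - b₀ ⊗ₜ[ℚ] a : ℝ ⊗[ℚ] ℝ) = a ⊗ₜ[ℚ] b - b ⊗ₜ[ℚ] a :=
      hb₀ ▸ wedge_shear a b r
    have h2 : ((a + ↑s * b₀) ⊗ₜ[ℚ] b₀ - b₀ ⊗ₜ[ℚ] (a + ↑s * b₀) : ℝ ⊗[ℚ] ℝ)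
        = a ⊗ₜ[ℚ] b₀ - b₀ ⊗ₜ[ℚ] a := by
      have := wedge_shear b₀ a s
      -- this : b₀ ⊗ₜ (a + s*b₀) - (a + s*b₀) ⊗ₜ b₀ = b₀ ⊗ₜ a - a ⊗ₜ b₀
      linear_combination (norm := abel) -this
    rw [h2, h1]
end

section
/- Given finitely many positive real numbers L_1,...,L_k, there exist positive real numbers l_1,...,l_m that are linearly independent over ℚ such that each L_i is a linear combination of l_1,...,l_m with nonnegative integer coefficients. -/
/-!
Add the `L i` one at a time to a positive, `ℚ`-independent family `l`. A new `x` outside the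
`ℚ`-span of `l` is simply appended. Otherwise, after dividing `l` by a common denominator,
`x = ∑ a j * l j` with `a j ∈ ℤ`, and the negative coefficients are removed one index `n` at a
time: for `ε = l n / M`, replace every `l j` by its residue `r j ∈ (0, ε]` modulo `ε`. Then
`r n = ε` and `l j = r j + t j * ε` with `t j ∈ ℕ`, so the old family lies in the `ℕ`-span of
the new one, and the coefficients of `x` only change at `n`, where the new one is about `x / ε`,
positive for `M` large. The family keeps its size while its `ℚ`-span can only grow, so it stays
linearly independent.
-/

open Set

theorem Rat.exists_nat_mul_eq_int {ι : Type*} [Fintype ι] (q : ι → ℚ) :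
    ∃ D : ℕ, 0 < D ∧ ∃ a : ι → ℤ, ∀ j, q j * D = a j := by
  classical
  refine ⟨∏ i, (q i).den, Finset.prod_pos fun i _ => (q i).pos,
    fun j => (q j).num * ∏ i ∈ Finset.univ.erase j, ((q i).den : ℤ), fun j => ?_⟩
  rw [← Finset.mul_prod_erase _ _ (Finset.mem_univ j)]
  push_cast
  rw [← mul_assoc, Rat.mul_den_eq_num]

theorem exists_int_coeff_of_mem_span_rat {ι : Type*} [Fintype ι] {l : ι → ℝ} {x : ℝ}
    (hx : x ∈ Submodule.span ℚ (range l)) :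
    ∃ D : ℕ, 0 < D ∧ ∃ a : ι → ℤ, x = ∑ j, a j * (l j / D) := by
  obtain ⟨q, rfl⟩ := (Submodule.mem_span_range_iff_exists_fun ℚ).1 hx
  obtain ⟨D, hD, a, ha⟩ := Rat.exists_nat_mul_eq_int q
  refine ⟨D, hD, a, Finset.sum_congr rfl fun j _ => ?_⟩
  have hD' : (D : ℝ) ≠ 0 := by positivity
  rw [Rat.smul_def, ← Rat.cast_intCast, ← ha j]
  push_cast
  field_simp

theorem LinearIndependent.of_span_le {K V ι ι' : Type*} [DivisionRing K] [AddCommGroup V]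
    [Module K V] [Fintype ι] [Fintype ι'] {v : ι → V} {w : ι' → V}
    (hv : LinearIndependent K v) (hcard : Fintype.card ι' ≤ Fintype.card ι)
    (hspan : Submodule.span K (range v) ≤ Submodule.span K (range w)) :
    LinearIndependent K w := by
  have := FiniteDimensional.span_of_finite K (finite_range w)
  rw [linearIndependent_iff_card_eq_finrank_span]
  have := finrank_range_le_card (R := K) w
  have := Submodule.finrank_mono hspan
  have := finrank_span_eq_card hv
  unfold Set.finrank at *
  omega

section Residue

variable {α : Type*} [AddCommGroup α] [LinearOrder α] [IsOrderedAddMonoid α] [Archimedean α]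
  {p : α} (hp : 0 < p)
include hp

theorem toIocMod_zero_zsmul_self (m : ℤ) : toIocMod hp 0 (m • p) = p := by
  rw [← zero_add (m • p), toIocMod_add_zsmul, toIocMod_apply_left, zero_add]

theorem toIocDiv_zero_nonneg {b : α} (hb : 0 < b) : 0 ≤ toIocDiv hp 0 b := by
  have hmod := (toIocMod_mem_Ioc hp 0 b).2
  rw [zero_add, ← self_sub_toIocDiv_zsmul] at hmod
  have : 0 < (toIocDiv hp 0 b + 1) • p := by
    rw [add_zsmul, one_zsmul]
    exact hb.trans_le (sub_le_iff_le_add'.1 hmod)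
  have := (smul_pos_iff_of_pos_right hp).1 this
  omega

theorem mem_closure_toIocMod_pair {b : α} (hb : 0 < b) :
    b ∈ AddSubmonoid.closure {toIocMod hp 0 b, p} := by
  rw [← toIocMod_add_toIocDiv_zsmul hp 0 b]
  lift toIocDiv hp 0 b to ℕ using toIocDiv_zero_nonneg hp hb with k
  exact add_mem (AddSubmonoid.subset_closure (by simp))
    (by simpa using nsmul_mem (AddSubmonoid.subset_closure (by simp)) k)

end Residue

section Reduction

variable {ι : Type*} [Fintype ι]

theorem sum_int_mul_mem_closure_of_nonneg (l : ι → ℝ) {a : ι → ℤ} (ha : ∀ j, 0 ≤ a j) :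
    ∑ j, (a j : ℝ) * l j ∈ AddSubmonoid.closure (range l) := by
  refine sum_mem fun j _ => ?_
  lift a j to ℕ using ha j with k
  have hj : l j ∈ AddSubmonoid.closure (range l) := AddSubmonoid.subset_closure (mem_range_self j)
  simpa using nsmul_mem hj k

theorem exists_pos_refinement_coeff_nonneg_at [DecidableEq ι] (l : ι → ℝ) (hl : ∀ j, 0 < l j)
    (a : ι → ℤ) (hx : 0 < ∑ j, a j * l j) (n : ι) :
    ∃ (l' : ι → ℝ) (a' : ι → ℤ), (∀ j, 0 < l' j) ∧
      range l ⊆ AddSubmonoid.closure (range l') ∧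
      ∑ j, a' j * l' j = ∑ j, a j * l j ∧ 0 ≤ a' n ∧ ∀ j ≠ n, a' j = a j := by
  set x := ∑ j, (a j : ℝ) * l j
  set B : ℝ := |(a n : ℝ)| + ∑ j, |(a j : ℝ)|
  obtain ⟨M, hM⟩ := exists_nat_gt (B * l n / x)
  have hM0 : (0 : ℝ) < M :=
    (div_nonneg (mul_nonneg (by positivity) (hl n).le) hx.le).trans_lt hM
  set ε := l n / M
  have hε : 0 < ε := div_pos (hl n) hM0
  have hBε : B * ε < x := by
    rw [div_lt_iff₀ hx] at hM
    rw [mul_div_assoc', div_lt_iff₀ hM0]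
    linarith
  set r := fun j => toIocMod hε 0 (l j)
  set t := fun j => toIocDiv hε 0 (l j)
  have hr : ∀ j, 0 < r j ∧ r j ≤ ε := fun j => by simpa using toIocMod_mem_Ioc hε 0 (l j)
  have hrt : ∀ j, r j + t j * ε = l j := fun j => toIocMod_add_toIocDiv_mul hε 0 (l j)
  have hrn : r n = ε := by
    have hln : l n = (M : ℤ) • ε := by
      rw [zsmul_eq_mul, Int.cast_natCast, mul_div_cancel₀ _ hM0.ne']
    rw [← toIocMod_zero_zsmul_self hε M, ← hln]
  set T := ∑ j, a j * t j
  have hxT : x = ∑ j, a j * r j + T * ε := by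
    simp only [x, T, ← hrt, mul_add, Finset.sum_add_distrib]
    push_cast
    simp only [Finset.sum_mul, mul_assoc]
  refine ⟨r, a + Pi.single n T, fun j => (hr j).1, ?_, ?_, ?_, ?_⟩
  · rintro _ ⟨j, rfl⟩
    refine AddSubmonoid.closure_mono ?_ (mem_closure_toIocMod_pair hε (hl j))
    exact pair_subset (mem_range_self j) (hrn ▸ mem_range_self n)
  · rw [hxT, ← hrn]
    simp [add_mul, Finset.sum_add_distrib, Pi.single_apply]
  · have hsum : ∑ j, (a j : ℝ) * r j ≤ (∑ j, |(a j : ℝ)|) * ε := by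
      rw [Finset.sum_mul]
      refine Finset.sum_le_sum fun j _ => ?_
      calc (a j : ℝ) * r j ≤ |(a j : ℝ)| * r j :=
            mul_le_mul_of_nonneg_right (le_abs_self _) (hr j).1.le
        _ ≤ |(a j : ℝ)| * ε := mul_le_mul_of_nonneg_left (hr j).2 (abs_nonneg _)
    have han : -|(a n : ℝ)| * ε ≤ a n * ε := mul_le_mul_of_nonneg_right (neg_abs_le _) hε.le
    have : (0 : ℝ) < (a n + T : ℤ) * ε := by push_cast; linarith
    simpa using (Int.cast_pos.1 (pos_of_mul_pos_left this hε.le)).le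
  · intro j hj
    simp [hj]

theorem exists_pos_refinement_of_int_coeff (l : ι → ℝ) (hl : ∀ j, 0 < l j) (a : ι → ℤ)
    (hx : 0 < ∑ j, a j * l j) :
    ∃ l' : ι → ℝ, (∀ j, 0 < l' j) ∧ range l ⊆ AddSubmonoid.closure (range l') ∧
      ∑ j, a j * l j ∈ AddSubmonoid.closure (range l') := by
  classical
  suffices key : ∀ s : Finset ι, ∀ (l : ι → ℝ) (a : ι → ℤ), (∀ j, 0 < l j) →
      0 < ∑ j, a j * l j → (∀ j ∉ s, 0 ≤ a j) →
      ∃ l' : ι → ℝ, (∀ j, 0 < l' j) ∧ range l ⊆ AddSubmonoid.closure (range l') ∧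
        ∑ j, a j * l j ∈ AddSubmonoid.closure (range l') from
    key Finset.univ l a hl hx (by simp)
  intro s
  induction s using Finset.induction_on with
  | empty =>
    intro l a hl _ ha
    exact ⟨l, hl, AddSubmonoid.subset_closure,
      sum_int_mul_mem_closure_of_nonneg l fun j => ha j (Finset.notMem_empty j)⟩
  | insert n s _ ih =>
    intro l a hl hx ha
    obtain ⟨l₁, a₁, hl₁, hsub₁, hsum₁, ha₁n, ha₁⟩ :=
      exists_pos_refinement_coeff_nonneg_at l hl a hx n
    have ha₁s : ∀ j ∉ s, 0 ≤ a₁ j := fun j hj => by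
      by_cases hjn : j = n
      · exact hjn ▸ ha₁n
      · exact ha₁ j hjn ▸ ha j (by simp [hjn, hj])
    obtain ⟨l', hl', hsub, hmem⟩ := ih l₁ a₁ hl₁ (hsum₁ ▸ hx) ha₁s
    exact ⟨l', hl', hsub₁.trans (AddSubmonoid.closure_le.2 hsub), hsum₁ ▸ hmem⟩

end Reduction

theorem exists_pos_linearIndependent_refinement_insert {m : ℕ} (l : Fin m → ℝ)
    (hl : ∀ j, 0 < l j) (hli : LinearIndependent ℚ l) {x : ℝ} (hx : 0 < x) :
    ∃ (m' : ℕ) (l' : Fin m' → ℝ), (∀ j, 0 < l' j) ∧ LinearIndependent ℚ l' ∧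
      insert x (range l) ⊆ AddSubmonoid.closure (range l') := by
  by_cases hspan : x ∈ Submodule.span ℚ (range l)
  · obtain ⟨D, hD, a, rfl⟩ := exists_int_coeff_of_mem_span_rat hspan
    obtain ⟨l', hl', hsub, hmem⟩ := exists_pos_refinement_of_int_coeff (fun j => l j / D)
      (fun j => div_pos (hl j) (Nat.cast_pos.2 hD)) a hx
    have hlD : range l ⊆ AddSubmonoid.closure (range l') := by
      rintro _ ⟨j, rfl⟩
      have : l j = D • (l j / D) := by rw [nsmul_eq_mul]; field_simp
      exact this ▸ nsmul_mem (hsub (mem_range_self j)) D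
    refine ⟨m, l', hl', hli.of_span_le le_rfl (Submodule.span_le.2 fun y hy => ?_),
      insert_subset hmem hlD⟩
    exact AddSubmonoid.closure_le (S := (Submodule.span ℚ (range l')).toAddSubmonoid).2
      Submodule.subset_span (hlD hy)
  · refine ⟨m + 1, Fin.cons x l, Fin.cases hx hl, linearIndependent_finCons.2 ⟨hli, hspan⟩, ?_⟩
    rw [Fin.range_cons]
    exact AddSubmonoid.subset_closure

theorem exists_pos_linearIndependent_refinement_of_finset (s : Finset ℝ) (hs : ∀ x ∈ s, 0 < x) :
    ∃ (m : ℕ) (l : Fin m → ℝ), (∀ j, 0 < l j) ∧ LinearIndependent ℚ l ∧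
      (s : Set ℝ) ⊆ AddSubmonoid.closure (range l) := by
  induction s using Finset.induction_on with
  | empty => exact ⟨0, Fin.elim0, Fin.rec0, linearIndependent_empty_type, by simp⟩
  | insert x s _ ih =>
    obtain ⟨m, l, hl, hli, hsub⟩ := ih fun y hy => hs y (Finset.mem_insert_of_mem hy)
    obtain ⟨m', l', hl', hli', hsub'⟩ :=
      exists_pos_linearIndependent_refinement_insert l hl hli (hs x (Finset.mem_insert_self x s))
    refine ⟨m', l', hl', hli', ?_⟩
    rw [Finset.coe_insert]
    exact insert_subset (hsub' (mem_insert x _))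
      (hsub.trans (AddSubmonoid.closure_le.2 ((subset_insert x _).trans hsub')))

/-- Given positive reals `L 1, ..., L k`, there exist positive reals
`l 1, ..., l m`, linearly independent over `ℚ`, such that each `L i` is a
linear combination of the `l j` with nonnegative integer coefficients. -/
theorem exists_rationally_independent_basis {k : ℕ} (L : Fin k → ℝ)
    (hL : ∀ i, 0 < L i) :
    ∃ (m : ℕ) (l : Fin m → ℝ),
      (∀ j, 0 < l j) ∧ LinearIndependent ℚ l ∧
      ∀ i, ∃ c : Fin m → ℕ, L i = ∑ j, (c j : ℝ) * l j := by
  obtain ⟨m, l, hl, hli, hsub⟩ :=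
    exists_pos_linearIndependent_refinement_of_finset (Finset.univ.image L) (by simpa using hL)
  refine ⟨m, l, hl, hli, fun i => ?_⟩
  obtain ⟨c, hc⟩ := (AddSubmonoid.mem_closure_range_iff_of_fintype (f := l)).1
    (hsub (Finset.mem_image_of_mem L (Finset.mem_univ i)))
  exact ⟨c, by simpa [nsmul_eq_mul] using hc⟩
end

section
/- Every interval exchange transformation of a half-open interval I = [p,q) can be written as a finite product (composition) of restricted rotations. -/
open scoped TensorProduct

/-- An interval exchange transformation of the half-open interval `[p, q)`:
a bijection of `[p, q)` onto itself, extended by the identity outside,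
which is a translation on each piece of a finite partition of `[p, q)`
into half-open intervals. -/
def IsIET (p q : ℝ) (f : ℝ → ℝ) : Prop :=
  Set.BijOn f (Set.Ico p q) (Set.Ico p q) ∧
  (∀ x, x ∉ Set.Ico p q → f x = x) ∧
  ∃ (n : ℕ) (pt : Fin (n + 1) → ℝ),
    StrictMono pt ∧ pt 0 = p ∧ pt (Fin.last n) = q ∧
    ∀ i : Fin n, ∃ t : ℝ,
      ∀ x ∈ Set.Ico (pt i.castSucc) (pt i.succ), f x = x + t

/-- A restricted rotation of type `(a, b)` on `[p, q)`: it exchanges two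
adjacent half-open intervals of lengths `a` (on the left) and `b` (on the
right) by translation, fixing the rest of the line. -/
def IsRestrictedRotation (p q a b : ℝ) (f : ℝ → ℝ) : Prop :=
  0 < a ∧ 0 < b ∧ ∃ x : ℝ, p ≤ x ∧ x + a + b ≤ q ∧
    (∀ y ∈ Set.Ico x (x + a), f y = y + b) ∧
    (∀ y ∈ Set.Ico (x + a) (x + a + b), f y = y - a) ∧
    (∀ y, y ∉ Set.Ico x (x + a + b) → f y = y)

/-- An interval swap map of type `a` on `[p, q)`: it interchanges two
disjoint half-open intervals of length `a` by translation, fixing the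
rest of the line. -/
def IsIntervalSwap (p q a : ℝ) (f : ℝ → ℝ) : Prop :=
  0 < a ∧ ∃ x y : ℝ, p ≤ x ∧ x + a ≤ y ∧ y + a ≤ q ∧
    (∀ z ∈ Set.Ico x (x + a), f z = z + (y - x)) ∧
    (∀ z ∈ Set.Ico y (y + a), f z = z - (y - x)) ∧
    (∀ z, z ∉ Set.Ico x (x + a) ∪ Set.Ico y (y + a) → f z = z)

/-- `f` is a finite product (composition) of interval swap maps on `[p, q)`. -/
def IsSwapProduct (p q : ℝ) (f : ℝ → ℝ) : Prop :=
  ∃ L : List (ℝ → ℝ), (∀ g ∈ L, ∃ a, IsIntervalSwap p q a g) ∧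
    f = L.foldr (· ∘ ·) id

/-- `ξ ∈ ℝ ⊗[ℚ] ℝ` is the SAF sum of `f` computed from some partition of
`[p, q)` into half-open intervals on each of which `f` is a translation. -/
def HasSAF (p q : ℝ) (f : ℝ → ℝ) (ξ : ℝ ⊗[ℚ] ℝ) : Prop :=
  ∃ (n : ℕ) (pt : Fin (n + 1) → ℝ) (t : Fin n → ℝ),
    StrictMono pt ∧ pt 0 = p ∧ pt (Fin.last n) = q ∧
    (∀ i : Fin n, ∀ x ∈ Set.Ico (pt i.castSucc) (pt i.succ), f x = x + t i) ∧
    ξ = ∑ i : Fin n, (pt i.succ - pt i.castSucc) ⊗ₜ[ℚ] t i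

section AuxIET

private lemma foldr_comp_append (L : List (ℝ → ℝ)) (r : ℝ → ℝ) :
    (L ++ [r]).foldr (· ∘ ·) id = (L.foldr (· ∘ ·) id) ∘ r := by
  induction L with
  | nil => rfl
  | cons g L ih => simp only [List.cons_append, List.foldr_cons, ih]; rfl

/-- `IsIET` with the number of pieces made explicit, phrased over `ℕ`. -/
private def IETn (n : ℕ) (p q : ℝ) (f : ℝ → ℝ) : Prop :=
  Set.BijOn f (Set.Ico p q) (Set.Ico p q) ∧
  (∀ x, x ∉ Set.Ico p q → f x = x) ∧
  ∃ pt t : ℕ → ℝ, (∀ i, i < n → pt i < pt (i + 1)) ∧ pt 0 = p ∧ pt n = q ∧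
    ∀ i, i < n → ∀ x ∈ Set.Ico (pt i) (pt (i + 1)), f x = x + t i

private lemma pt_mono {n : ℕ} {pt : ℕ → ℝ} (h : ∀ i, i < n → pt i < pt (i + 1)) :
    ∀ i j, i ≤ j → j ≤ n → pt i ≤ pt j := by
  intro i j hij hjn
  induction j, hij using Nat.le_induction with
  | base => exact le_rfl
  | succ j hij ih => exact le_trans (ih (by omega)) (le_of_lt (h j (by omega)))

private lemma exists_piece {pt : ℕ → ℝ} :
    ∀ (N : ℕ), (∀ i, i < N → pt i < pt (i + 1)) → ∀ z, pt 0 ≤ z → z < pt N →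
      ∃ k, k < N ∧ pt k ≤ z ∧ z < pt (k + 1) := by
  intro N
  induction N with
  | zero => intro _ z h1 h2; exact absurd (h1.trans_lt h2) (lt_irrefl _)
  | succ N ih =>
    intro hm z h1 h2
    by_cases hz : z < pt N
    · obtain ⟨k, hk, h⟩ := ih (fun i hi => hm i (by omega)) z h1 hz
      exact ⟨k, by omega, h⟩
    · exact ⟨N, by omega, le_of_not_gt hz, h2⟩

private lemma rr_mono {p p' q a b : ℝ} (hp : p ≤ p') {g : ℝ → ℝ}
    (h : IsRestrictedRotation p' q a b g) : IsRestrictedRotation p q a b g := by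
  obtain ⟨ha, hb, x, hx1, hx2, h1, h2, h3⟩ := h
  exact ⟨ha, hb, x, le_trans hp hx1, hx2, h1, h2, h3⟩

private lemma ietn_main : ∀ (n : ℕ) (p q : ℝ) (f : ℝ → ℝ), IETn n p q f →
    ∃ L : List (ℝ → ℝ), (∀ g ∈ L, ∃ a b, IsRestrictedRotation p q a b g) ∧
      f = L.foldr (· ∘ ·) id := by
  intro n
  induction n with
  | zero =>
    rintro p q f ⟨_, hout, pt, t, _, h0, hN, _⟩
    have hpq : p = q := by rw [← h0, ← hN]
    refine ⟨[], by simp, funext fun x => ?_⟩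
    have : x ∉ Set.Ico p q := by rw [hpq]; simp
    simpa using hout x this
  | succ n ih =>
    rintro p q f ⟨hbij, hout, pt, t, hm, h0, hN, ht⟩
    have hmono : ∀ i j, i ≤ j → j ≤ n + 1 → pt i ≤ pt j := pt_mono hm
    have hpq : p < q := by
      rw [← h0, ← hN]
      exact lt_of_le_of_lt (hmono 0 n (Nat.zero_le _) (by omega)) (hm n (by omega))
    -- find the piece whose image starts at `p`
    obtain ⟨z, hz, hfz⟩ := hbij.2.2 (show p ∈ Set.Ico p q from ⟨le_rfl, hpq⟩)
    obtain ⟨k, hkn, hk1, hk2⟩ := exists_piece (n + 1) hm z (h0 ▸ hz.1) (hN ▸ hz.2)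
    have hpk : p ≤ pt k := h0 ▸ hmono 0 k (Nat.zero_le _) (by omega)
    have hk1q : pt (k + 1) ≤ q := hN ▸ hmono (k + 1) (n + 1) (by omega) le_rfl
    have hkq : pt k < q := lt_of_lt_of_le (hm k hkn) hk1q
    have htkv : t k = p - pt k := by
      have e1 : f z = z + t k := ht k hkn z ⟨hk1, hk2⟩
      have h1 : pt k + t k ≤ p := by rw [← hfz, e1]; linarith
      have e2 : f (pt k) = pt k + t k := ht k hkn (pt k) ⟨le_rfl, hm k hkn⟩
      have h2 : p ≤ pt k + t k := by
        have := (hbij.1 ⟨hpk, hkq⟩).1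
        rwa [e2] at this
      linarith
    set len := pt (k + 1) - pt k with hlendef
    have hlen : 0 < len := by have := hm k hkn; simp [hlendef]; linarith
    have hpkl : pt k + len = pt (k + 1) := by simp [hlendef]
    have hplk : p + len ≤ pt (k + 1) := by linarith
    have keyB : ∀ x ∈ Set.Ico (pt k) (pt (k + 1)), f x ∈ Set.Ico p (p + len) := by
      intro x hx
      rw [ht k hkn x hx, htkv]
      exact ⟨by linarith [hx.1], by linarith [hx.2]⟩
    have keyA : ∀ x ∈ Set.Ico p q, x ∉ Set.Ico (pt k) (pt (k + 1)) → p + len ≤ f x := by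
      intro x hx hxk
      by_contra hlt
      push_neg at hlt
      have hfx := hbij.1 hx
      have hwmem : f x + (pt k - p) ∈ Set.Ico (pt k) (pt (k + 1)) :=
        ⟨by linarith [hfx.1], by linarith⟩
      have hWI : f x + (pt k - p) ∈ Set.Ico p q :=
        ⟨by linarith [hfx.1], by linarith⟩
      have hfw : f (f x + (pt k - p)) = f x := by
        rw [ht k hkn _ hwmem, htkv]; ring
      have := hbij.2.1 hWI hx hfw
      exact hxk (this ▸ hwmem)
    classical
    set r : ℝ → ℝ := fun y => if p ≤ y ∧ y < pt k then y + len
      else if pt k ≤ y ∧ y < pt (k + 1) then y - (pt k - p) else y with hrdef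
    set g : ℝ → ℝ := fun y => if p + len ≤ y ∧ y < pt (k + 1) then f (y - len)
      else if pt (k + 1) ≤ y ∧ y < q then f y else y with hgdef
    -- values of r and g
    have hrv1 : ∀ y, p ≤ y → y < pt k → r y = y + len := by
      intro y h1 h2; simp only [hrdef]; rw [if_pos ⟨h1, h2⟩]
    have hrv2 : ∀ y, pt k ≤ y → y < pt (k + 1) → r y = y - (pt k - p) := by
      intro y h1 h2; simp only [hrdef]
      rw [if_neg (by push_neg; intro h; linarith), if_pos ⟨h1, h2⟩]
    have hrv3 : ∀ y, y < p ∨ pt (k + 1) ≤ y → r y = y := by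
      intro y h1; simp only [hrdef]
      rcases h1 with h1 | h1
      · rw [if_neg (by push_neg; intro h; linarith), if_neg (by push_neg; intro h; linarith)]
      · rw [if_neg (by push_neg; intro h; linarith), if_neg (by push_neg; intro h; linarith)]
    have hgval1 : ∀ y, p + len ≤ y → y < pt (k + 1) → g y = f (y - len) := by
      intro y h1 h2; simp only [hgdef]; rw [if_pos ⟨h1, h2⟩]
    have hgval2 : ∀ y, pt (k + 1) ≤ y → y < q → g y = f y := by
      intro y h1 h2; simp only [hgdef]
      rw [if_neg (by push_neg; intro h; linarith), if_pos ⟨h1, h2⟩]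
    have hgval3 : ∀ y, y < p + len ∨ q ≤ y → g y = y := by
      intro y h1; simp only [hgdef]
      rcases h1 with h1 | h1
      · rw [if_neg (by push_neg; intro h; linarith), if_neg (by push_neg; intro h; linarith)]
      · rw [if_neg (by push_neg; intro h; linarith), if_neg (by push_neg; intro h; linarith)]
    -- f = g ∘ r
    have hcomp : f = g ∘ r := by
      funext y
      show f y = g (r y)
      rcases lt_or_ge y p with hy | hy
      · rw [hrv3 y (Or.inl hy), hgval3 y (Or.inl (by linarith))]
        exact hout y (by simp [Set.mem_Ico]; intro h; linarith)
      rcases lt_or_ge y (pt k) with hy2 | hy2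
      · rw [hrv1 y hy hy2, hgval1 (y + len) (by linarith) (by linarith)]
        congr 1; ring
      rcases lt_or_ge y (pt (k + 1)) with hy3 | hy3
      · rw [hrv2 y hy2 hy3, hgval3 (y - (pt k - p)) (Or.inl (by linarith)),
          ht k hkn y ⟨hy2, hy3⟩, htkv]
        ring
      rcases lt_or_ge y q with hy4 | hy4
      · rw [hrv3 y (Or.inr hy3), hgval2 y hy3 hy4]
      · rw [hrv3 y (Or.inr hy3), hgval3 y (Or.inr hy4)]
        exact hout y (by simp [Set.mem_Ico]; intro h; linarith)
    -- g is an IET of [p + len, q) with n pieces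
    have hgout : ∀ x, x ∉ Set.Ico (p + len) q → g x = x := by
      intro x hx
      simp only [Set.mem_Ico, not_and, not_lt] at hx
      rcases lt_or_ge x (p + len) with h1 | h1
      · exact hgval3 x (Or.inl h1)
      · exact hgval3 x (Or.inr (hx h1))
    have hgmaps : Set.MapsTo g (Set.Ico (p + len) q) (Set.Ico (p + len) q) := by
      intro y hy
      rcases lt_or_ge y (pt (k + 1)) with h1 | h1
      · rw [hgval1 y hy.1 h1]
        have hz : y - len ∈ Set.Ico p q := ⟨by linarith [hy.1], by linarith⟩
        have hnk : y - len ∉ Set.Ico (pt k) (pt (k + 1)) := by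
          simp [Set.mem_Ico]; intro h; linarith
        exact ⟨keyA _ hz hnk, (hbij.1 hz).2⟩
      · rw [hgval2 y h1 hy.2]
        have hz : y ∈ Set.Ico p q := ⟨by linarith [hy.1], hy.2⟩
        have hnk : y ∉ Set.Ico (pt k) (pt (k + 1)) := by
          simp [Set.mem_Ico]; intro h; linarith
        exact ⟨keyA _ hz hnk, (hbij.1 hz).2⟩
    have hginj : Set.InjOn g (Set.Ico (p + len) q) := by
      intro y1 hy1 y2 hy2 he
      rcases lt_or_ge y1 (pt (k + 1)) with h1 | h1 <;>
        rcases lt_or_ge y2 (pt (k + 1)) with h2 | h2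
      · rw [hgval1 y1 hy1.1 h1, hgval1 y2 hy2.1 h2] at he
        have := hbij.2.1 (show y1 - len ∈ Set.Ico p q from ⟨by linarith [hy1.1], by linarith⟩)
          (show y2 - len ∈ Set.Ico p q from ⟨by linarith [hy2.1], by linarith⟩) he
        linarith
      · rw [hgval1 y1 hy1.1 h1, hgval2 y2 h2 hy2.2] at he
        have := hbij.2.1 (show y1 - len ∈ Set.Ico p q from ⟨by linarith [hy1.1], by linarith⟩)
          (show y2 ∈ Set.Ico p q from ⟨by linarith [hy2.1], hy2.2⟩) he
        linarith
      · rw [hgval2 y1 h1 hy1.2, hgval1 y2 hy2.1 h2] at he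
        have := hbij.2.1 (show y1 ∈ Set.Ico p q from ⟨by linarith [hy1.1], hy1.2⟩)
          (show y2 - len ∈ Set.Ico p q from ⟨by linarith [hy2.1], by linarith⟩) he
        linarith
      · rw [hgval2 y1 h1 hy1.2, hgval2 y2 h2 hy2.2] at he
        exact hbij.2.1 ⟨by linarith [hy1.1], hy1.2⟩ ⟨by linarith [hy2.1], hy2.2⟩ he
    have hgsurj : Set.SurjOn g (Set.Ico (p + len) q) (Set.Ico (p + len) q) := by
      intro u hu
      obtain ⟨z, hz, hfzu⟩ := hbij.2.2 (show u ∈ Set.Ico p q from ⟨by linarith [hu.1], hu.2⟩)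
      have hznk : z ∉ Set.Ico (pt k) (pt (k + 1)) := by
        intro hmem
        have := keyB z hmem
        rw [hfzu] at this
        linarith [hu.1, this.2]
      simp only [Set.mem_Ico, not_and, not_lt] at hznk
      rcases lt_or_ge z (pt k) with h1 | h1
      · refine ⟨z + len, ⟨by linarith [hz.1], by linarith⟩, ?_⟩
        rw [hgval1 (z + len) (by linarith [hz.1]) (by linarith)]
        simpa using hfzu
      · have h2 := hznk h1
        refine ⟨z, ⟨by linarith, hz.2⟩, ?_⟩
        rw [hgval2 z h2 hz.2]; exact hfzu
    have hgiet : IETn n (p + len) q g := by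
      refine ⟨⟨hgmaps, hginj, hgsurj⟩, hgout, fun i => if i ≤ k then pt i + len else pt (i + 1),
        fun i => if i < k then t i - len else t (i + 1), ?_, ?_, ?_, ?_⟩
      · intro i hi
        beta_reduce
        rcases Nat.lt_or_ge (i + 1) (k + 1) with h1 | h1
        · rw [if_pos (by omega), if_pos (by omega)]
          have := hm i (by omega); linarith
        rcases Nat.eq_or_lt_of_le h1 with h2 | h2
        · rw [if_pos (by omega), if_neg (by omega)]
          have hik : i = k := by omega
          rw [hik, hpkl]
          exact hm (k + 1) (by omega)
        · rw [if_neg (by omega), if_neg (by omega)]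
          exact hm (i + 1) (by omega)
      · beta_reduce
        rw [if_pos (Nat.zero_le _), h0]
      · beta_reduce
        by_cases hnk2 : n ≤ k
        · have hkn' : k = n := by omega
          rw [if_pos hnk2, hlendef, hkn', hN]
          ring
        · rw [if_neg hnk2]
          exact hN
      · intro i hi x hx
        beta_reduce at hx ⊢
        rcases Nat.lt_or_ge i k with h1 | h1
        · rw [if_pos (by omega), if_pos (by omega)] at hx
          rw [if_pos h1]
          have hxi : x - len ∈ Set.Ico (pt i) (pt (i + 1)) := ⟨by linarith [hx.1], by linarith [hx.2]⟩
          have hle1 : p ≤ pt i := h0 ▸ hmono 0 i (Nat.zero_le _) (by omega)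
          have hle2 : pt (i + 1) ≤ pt k := hmono (i + 1) k (by omega) (by omega)
          rw [hgval1 x (by linarith [hx.1]) (by linarith [hx.2]), ht i (by omega) _ hxi]
          ring
        · have hpt1 : (if i ≤ k then pt i + len else pt (i + 1)) = pt (i + 1) := by
            rcases Nat.eq_or_lt_of_le h1 with h2 | h2
            · rw [if_pos (by omega), ← h2, hpkl, h2]
            · rw [if_neg (by omega)]
          have hpt2 : (if i + 1 ≤ k then pt (i + 1) + len else pt (i + 2)) = pt (i + 2) := by
            rw [if_neg (by omega)]
          rw [hpt1, hpt2] at hx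
          rw [if_neg (by omega)]
          have hle1 : pt (k + 1) ≤ pt (i + 1) := hmono (k + 1) (i + 1) (by omega) (by omega)
          have hle2 : pt (i + 2) ≤ q := hN ▸ hmono (i + 2) (n + 1) (by omega) le_rfl
          rw [hgval2 x (by linarith [hx.1]) (by linarith [hx.2])]
          exact ht (i + 1) (by omega) x hx
    obtain ⟨L', hL', hgL⟩ := ih (p + len) q g hgiet
    have hL'p : ∀ g' ∈ L', ∃ a b, IsRestrictedRotation p q a b g' := by
      intro g' hg'
      obtain ⟨a, b, hab⟩ := hL' g' hg'
      exact ⟨a, b, rr_mono (by linarith) hab⟩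
    by_cases hap : p < pt k
    · refine ⟨L' ++ [r], ?_, ?_⟩
      · intro g' hg'
        rcases List.mem_append.mp hg' with h | h
        · exact hL'p g' h
        · have : g' = r := by simpa using h
          subst this
          refine ⟨pt k - p, len, by linarith, hlen, p, le_rfl, by linarith, ?_, ?_, ?_⟩
          · intro y hy
            exact hrv1 y hy.1 (by have := hy.2; linarith)
          · intro y hy
            rw [hrv2 y (by have := hy.1; linarith) (by have := hy.2; linarith)]
          · intro y hy
            simp only [Set.mem_Ico, not_and, not_lt] at hy
            rcases lt_or_ge y p with h1 | h1
            · exact hrv3 y (Or.inl h1)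
            · exact hrv3 y (Or.inr (by have := hy h1; linarith))
      · rw [hcomp, foldr_comp_append, hgL]
    · have hpk' : pt k = p := le_antisymm (le_of_not_gt hap) hpk
      have hr_id : r = id := by
        funext y
        simp only [hrdef, hpk', id_eq]
        split_ifs with h1 h2
        · linarith [h1.1, h1.2]
        · ring
        · rfl
      refine ⟨L', hL'p, ?_⟩
      rw [hcomp, hr_id, Function.comp_id, hgL]

end AuxIET

/-- Every interval exchange transformation of `[p, q)` is a finite product
of restricted rotations. -/
theorem iet_eq_prod_restrictedRotations (p q : ℝ) (hpq : p < q)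
    (f : ℝ → ℝ) (hf : IsIET p q f) :
    ∃ L : List (ℝ → ℝ),
      (∀ g ∈ L, ∃ a b, IsRestrictedRotation p q a b g) ∧
      f = L.foldr (· ∘ ·) id := by
  obtain ⟨hbij, hout, n, pt, hsm, h0, hlast, ht⟩ := hf
  choose t ht using ht
  apply ietn_main n p q f
  refine ⟨hbij, hout, fun i => pt ⟨min i n, Nat.lt_succ_of_le (min_le_right _ _)⟩,
    fun i => if h : i < n then t ⟨i, h⟩ else 0, ?_, ?_, ?_, ?_⟩
  · intro i hi
    beta_reduce
    apply hsm
    simp only [Fin.mk_lt_mk]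
    omega
  · have : (⟨min 0 n, Nat.lt_succ_of_le (min_le_right _ _)⟩ : Fin (n + 1)) = 0 := by
      apply Fin.ext; simp
    beta_reduce
    rw [this, h0]
  · have : (⟨min n n, Nat.lt_succ_of_le (min_le_right _ _)⟩ : Fin (n + 1)) = Fin.last n := by
      apply Fin.ext; simp
    beta_reduce
    rw [this, hlast]
  · intro i hi x hx
    beta_reduce at hx ⊢
    rw [dif_pos hi]
    have e1 : (⟨min i n, Nat.lt_succ_of_le (min_le_right _ _)⟩ : Fin (n + 1)) =
        (⟨i, hi⟩ : Fin n).castSucc := by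
      apply Fin.ext; simp; omega
    have e2 : (⟨min (i + 1) n, Nat.lt_succ_of_le (min_le_right _ _)⟩ : Fin (n + 1)) =
        (⟨i, hi⟩ : Fin n).succ := by
      apply Fin.ext; simp; omega
    rw [e1, e2] at hx
    exact ht ⟨i, hi⟩ x hx
end

section
/- Every interval exchange transformation of finite order (as an element of the group of interval exchange transformations of I = [p,q)) can be written as a finite product of interval swap maps. -/
open scoped TensorProduct

/-!
Since `f` has finite order, the orbit `D` of its breakpoints is finite. Cutting `[p, q)` at the
points of `D` gives pieces that `f` translates onto one another, and the left endpoint of a piece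
goes to the left endpoint of a piece. The image of a piece cannot run past the next cut point
(the preimage of that point would be a cut point inside the piece), so no piece is longer than the
piece it is sent to, and summing over all pieces forces equal lengths: `f` permutes pieces of
equal length. Composing with the swap of the pieces `i` and `σ i` fixes one more piece, so
induction on the support of the permutation writes `f` as a product of interval swaps.
-/

open Set Function

lemma IsSwapProduct.id (p q : ℝ) : IsSwapProduct p q id :=
  ⟨[], by simp, rfl⟩

lemma IsIntervalSwap.comp_isSwapProduct {p q a : ℝ} {s g : ℝ → ℝ}
    (hs : IsIntervalSwap p q a s) (hg : IsSwapProduct p q g) : IsSwapProduct p q (s ∘ g) := by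
  obtain ⟨L, hL, rfl⟩ := hg
  exact ⟨s :: L, by simpa using ⟨⟨a, hs⟩, hL⟩, rfl⟩

section PieceExchange

variable {ι : Type*} {p q : ℝ} {l w : ι → ℝ}

structure IsPiecePacking (p q : ℝ) (l w : ι → ℝ) : Prop where
  width_pos : ∀ i, 0 < w i
  le_left : ∀ i, p ≤ l i
  right_le : ∀ i, l i + w i ≤ q
  pairwise_disjoint : Pairwise (Disjoint on fun i => Ico (l i) (l i + w i))

structure IsPieceExchange (p q : ℝ) (l w : ι → ℝ) (σ : Equiv.Perm ι) (f : ℝ → ℝ) : Prop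
    extends IsPiecePacking p q l w where
  width_perm : ∀ i, w (σ i) = w i
  apply_of_mem : ∀ i, ∀ x ∈ Ico (l i) (l i + w i), f x = x + (l (σ i) - l i)
  apply_of_forall_notMem : ∀ x, (∀ i, x ∉ Ico (l i) (l i + w i)) → f x = x

lemma IsPiecePacking.eq_of_mem (h : IsPiecePacking p q l w) {i j : ι} {x : ℝ}
    (hi : x ∈ Ico (l i) (l i + w i)) (hj : x ∈ Ico (l j) (l j + w j)) : i = j :=
  h.pairwise_disjoint.eq (not_disjoint_iff.mpr ⟨x, hi, hj⟩)

noncomputable def pieceMap (l w : ι → ℝ) (σ : Equiv.Perm ι) (x : ℝ) : ℝ :=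
  open Classical in
  if h : ∃ i, x ∈ Ico (l i) (l i + w i) then x + (l (σ h.choose) - l h.choose) else x

lemma IsPiecePacking.isPieceExchange_pieceMap (h : IsPiecePacking p q l w) {σ : Equiv.Perm ι}
    (hσ : ∀ i, w (σ i) = w i) : IsPieceExchange p q l w σ (pieceMap l w σ) where
  toIsPiecePacking := h
  width_perm := hσ
  apply_of_mem i x hx := by
    have hex : ∃ i, x ∈ Ico (l i) (l i + w i) := ⟨i, hx⟩
    rw [pieceMap, dif_pos hex, h.eq_of_mem hex.choose_spec hx]
  apply_of_forall_notMem x hx := by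
    rw [pieceMap, dif_neg (not_exists.mpr hx)]

variable {σ τ : Equiv.Perm ι} {f g : ℝ → ℝ}

lemma IsPieceExchange.mapsTo (h : IsPieceExchange p q l w σ f) (i : ι) :
    MapsTo f (Ico (l i) (l i + w i)) (Ico (l (σ i)) (l (σ i) + w (σ i))) := by
  intro x hx
  rw [h.apply_of_mem i x hx, h.width_perm]
  constructor <;> linarith [hx.1, hx.2]

lemma IsPieceExchange.comp (hg : IsPieceExchange p q l w τ g)
    (hf : IsPieceExchange p q l w σ f) : IsPieceExchange p q l w (τ * σ) (g ∘ f) where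
  toIsPiecePacking := hf.toIsPiecePacking
  width_perm i := by rw [Equiv.Perm.mul_apply, hg.width_perm, hf.width_perm]
  apply_of_mem i x hx := by
    rw [comp_apply, hg.apply_of_mem _ _ (hf.mapsTo i hx), hf.apply_of_mem i x hx,
      Equiv.Perm.mul_apply]
    ring
  apply_of_forall_notMem x hx := by
    rw [comp_apply, hf.apply_of_forall_notMem x hx, hg.apply_of_forall_notMem x hx]

lemma IsPieceExchange.eq_id (h : IsPieceExchange p q l w 1 f) : f = id := by
  funext x
  by_cases hx : ∃ i, x ∈ Ico (l i) (l i + w i)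
  · obtain ⟨i, hi⟩ := hx
    simp [h.apply_of_mem i x hi]
  · exact h.apply_of_forall_notMem x (not_exists.mp hx)

variable [DecidableEq ι]

lemma IsPieceExchange.isIntervalSwap_of_lt {i j : ι}
    (h : IsPieceExchange p q l w (Equiv.swap i j) f) (hlt : l i < l j) :
    IsIntervalSwap p q (w i) f := by
  have hw : w j = w i := by simpa using h.width_perm i
  have hne : i ≠ j := by rintro rfl; exact hlt.false
  have hij : l i + w i ≤ l j := by
    have := Set.Ico_disjoint_Ico.mp (h.pairwise_disjoint hne)
    rw [hw, min_le_iff, le_max_iff, le_max_iff] at this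
    rcases this with (h1 | h1) | (h1 | h1) <;> linarith [h.width_pos i]
  refine ⟨h.width_pos i, l i, l j, h.le_left i, hij, hw ▸ h.right_le j, ?_, ?_, ?_⟩
  · intro z hz
    simpa using h.apply_of_mem i z hz
  · intro z hz
    rw [h.apply_of_mem j z (hw ▸ hz), Equiv.swap_apply_right]
    ring
  · intro z hz
    by_cases hex : ∃ k, z ∈ Ico (l k) (l k + w k)
    · obtain ⟨k, hk⟩ := hex
      have hki : k ≠ i := by rintro rfl; exact hz (Or.inl hk)
      have hkj : k ≠ j := by rintro rfl; exact hz (Or.inr (hw ▸ hk))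
      simp [h.apply_of_mem k z hk, Equiv.swap_apply_of_ne_of_ne hki hkj]
    · exact h.apply_of_forall_notMem z (not_exists.mp hex)

lemma IsPieceExchange.isIntervalSwap {i j : ι} (h : IsPieceExchange p q l w (Equiv.swap i j) f)
    (hij : i ≠ j) : IsIntervalSwap p q (w i) f := by
  have hl : l i ≠ l j := fun he =>
    hij (h.eq_of_mem ⟨le_rfl, by linarith [h.width_pos i]⟩
      ⟨he.ge, by linarith [h.width_pos j]⟩)
  rcases hl.lt_or_gt with hlt | hlt
  · exact h.isIntervalSwap_of_lt hlt
  · rw [Equiv.swap_comm] at h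
    have hw : w i = w j := by simpa using h.width_perm j
    exact hw ▸ h.isIntervalSwap_of_lt hlt

theorem IsPieceExchange.isSwapProduct [Fintype ι] (h : IsPieceExchange p q l w σ f) :
    IsSwapProduct p q f := by
  induction hn : σ.support.card using Nat.strong_induction_on generalizing σ f with
  | _ n ih =>
  by_cases hσ : σ = 1
  · subst hσ
    rw [h.eq_id]
    exact IsSwapProduct.id p q
  obtain ⟨i, hi⟩ : ∃ i, σ i ≠ i := by
    contrapose! hσ
    exact Equiv.ext hσ
  set τ := Equiv.swap i (σ i)
  have hs : IsPieceExchange p q l w τ (pieceMap l w τ) :=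
    h.isPieceExchange_pieceMap fun k => by
      rcases eq_or_ne k i with rfl | hki
      · simp [τ, h.width_perm]
      rcases eq_or_ne k (σ i) with rfl | hkσ
      · simp [τ, h.width_perm]
      · rw [Equiv.swap_apply_of_ne_of_ne hki hkσ]
  have hss : pieceMap l w τ ∘ pieceMap l w τ = id := by
    have hss := hs.comp hs
    rw [Equiv.swap_mul_self] at hss
    exact hss.eq_id
  have hsf : IsSwapProduct p q (pieceMap l w τ ∘ f) :=
    ih _ (hn ▸ Equiv.Perm.card_support_swap_mul hi) (hs.comp h) rfl
  rw [← id_comp f, ← hss, comp_assoc]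
  exact (hs.isIntervalSwap hi.symm).comp_isSwapProduct hsf

end PieceExchange

section NextPoint

variable {p q x y : ℝ} {D : Finset ℝ}

-- For `q ≤ x` this is the junk value `sInf ∅ = 0`.
noncomputable def nextPoint (q : ℝ) (D : Finset ℝ) (x : ℝ) : ℝ :=
  sInf ((insert q D).filter (x < ·) : Set ℝ)

lemma nextPoint_mem_filter (hx : x < q) : nextPoint q D x ∈ (insert q D).filter (x < ·) :=
  Finset.Nonempty.csInf_mem ⟨q, by simp [hx]⟩

lemma nextPoint_mem (hx : x < q) : nextPoint q D x ∈ insert q D :=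
  (Finset.mem_filter.mp (nextPoint_mem_filter hx)).1

lemma lt_nextPoint (hx : x < q) : x < nextPoint q D x :=
  (Finset.mem_filter.mp (nextPoint_mem_filter hx)).2

lemma nextPoint_le (hy : y ∈ insert q D) (hxy : x < y) : nextPoint q D x ≤ y :=
  csInf_le (Finset.bddBelow _) (Finset.mem_coe.mpr (Finset.mem_filter.mpr ⟨hy, hxy⟩))

lemma nextPoint_le_right (hx : x < q) : nextPoint q D x ≤ q :=
  nextPoint_le (Finset.mem_insert_self q D) hx

lemma isPiecePacking_nextPoint (hD : ↑D ⊆ Ico p q) :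
    IsPiecePacking p q (fun d : D => (d : ℝ)) (fun d => nextPoint q D d - d) where
  width_pos d := sub_pos.mpr (lt_nextPoint (hD d.2).2)
  le_left d := (hD d.2).1
  right_le d := by simpa using nextPoint_le_right (hD d.2).2
  pairwise_disjoint d e hde := by
    wlog hlt : (d : ℝ) < e generalizing d e
    · exact (this e d hde.symm (lt_of_le_of_ne (not_lt.mp hlt)
        (fun h => hde (Subtype.ext h.symm)))).symm
    simp only [onFun, add_sub_cancel]
    exact Set.Ico_disjoint_Ico_same.mono_right
      (Set.Ico_subset_Ico_left (nextPoint_le (Finset.mem_insert_of_mem e.2) hlt))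

lemma exists_mem_Ico_nextPoint (hp : p ∈ insert q D) (hx : x ∈ Ico p q) :
    ∃ d ∈ D, x ∈ Ico d (nextPoint q D d) := by
  have hpD : p ∈ D := (Finset.mem_insert.mp hp).resolve_left (hx.1.trans_lt hx.2).ne
  have hne : (D.filter (· ≤ x)).Nonempty := ⟨p, Finset.mem_filter.mpr ⟨hpD, hx.1⟩⟩
  obtain ⟨hdD, hdx⟩ := Finset.mem_filter.mp (Finset.max'_mem _ hne)
  refine ⟨_, hdD, hdx, not_le.mp fun hle => ?_⟩
  set d := (D.filter (· ≤ x)).max' hne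
  have hnext : nextPoint q D d ∈ D :=
    (Finset.mem_insert.mp (nextPoint_mem (hdx.trans_lt hx.2))).resolve_left
      (hle.trans_lt hx.2).ne
  have := (D.filter (· ≤ x)).le_max' _ (Finset.mem_filter.mpr ⟨hnext, hle⟩)
  exact (lt_nextPoint (hdx.trans_lt hx.2)).not_ge this

end NextPoint

lemma Fin.exists_mem_Ico_castSucc_succ {X : Type*} [LinearOrder X] {m : ℕ}
    (pt : Fin (m + 1) → X) {x : X} (hx : x ∈ Ico (pt 0) (pt (Fin.last m))) :
    ∃ i : Fin m, x ∈ Ico (pt i.castSucc) (pt i.succ) := by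
  set a : ℕ → X := fun k => pt ⟨min k m, Nat.lt_succ_of_le (min_le_right k m)⟩
  have ha : ∀ i : Fin (m + 1), a i = pt i := fun i =>
    congrArg pt (Fin.ext (min_eq_left (Nat.le_of_lt_succ i.isLt)))
  have := Ico_subset_biUnion_Ico m a (by simpa [← ha] using hx)
  simp only [mem_iUnion, Finset.mem_range, exists_prop] at this
  obtain ⟨k, hk, hxk⟩ := this
  refine ⟨⟨k, hk⟩, ?_⟩
  simpa [← ha] using hxk

lemma exists_finset_superset_mapsTo_of_iterate_eq_id {α : Type*} {f : α → α} {n : ℕ}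
    (hn : 0 < n) (hf : f^[n] = id) (B : Finset α) {S : Set α} (hS : MapsTo f S S)
    (hBS : ↑B ⊆ S) : ∃ D : Finset α, B ⊆ D ∧ ↑D ⊆ S ∧ MapsTo f D D := by
  classical
  refine ⟨(Finset.range n).biUnion fun k => B.image f^[k], ?_, ?_, ?_⟩
  · intro b hb
    exact Finset.mem_biUnion.mpr ⟨0, Finset.mem_range.mpr hn, Finset.mem_image.mpr ⟨b, hb, rfl⟩⟩
  · intro y hy
    simp only [Finset.coe_biUnion, Finset.coe_range, Finset.coe_image, mem_iUnion, mem_image]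
      at hy
    obtain ⟨k, -, b, hb, rfl⟩ := hy
    exact hS.iterate k (hBS hb)
  · intro y hy
    simp only [Finset.coe_biUnion, Finset.coe_range, Finset.coe_image, mem_iUnion, mem_image,
      mem_Iio] at hy ⊢
    obtain ⟨k, -, b, hb, rfl⟩ := hy
    have hb_per : IsPeriodicPt f n b := congrFun hf b
    refine ⟨(k + 1) % n, Nat.mod_lt _ hn, b, hb, ?_⟩
    rw [hb_per.iterate_mod_apply, iterate_succ_apply']

lemma Equiv.Perm.apply_eq_of_forall_le {ι M : Type*} [Fintype ι] [AddCommMonoid M]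
    [PartialOrder M] [IsOrderedCancelAddMonoid M] (σ : Equiv.Perm ι) {w : ι → M}
    (h : ∀ i, w i ≤ w (σ i)) (i : ι) : w (σ i) = w i :=
  ((Finset.sum_eq_sum_iff_of_le fun i _ => h i).mp (Equiv.sum_comp σ w).symm i
    (Finset.mem_univ i)).symm

section IET

variable {p q : ℝ} {f : ℝ → ℝ} {D : Finset ℝ}

lemma apply_eq_of_mem_Ico_nextPoint {m : ℕ} {pt : Fin (m + 1) → ℝ} (hp : pt 0 = p)
    (hq : pt (Fin.last m) = q)
    (htr : ∀ i : Fin m, ∃ t, ∀ x ∈ Ico (pt i.castSucc) (pt i.succ), f x = x + t)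
    (hptD : ∀ i, pt i ∈ insert q D) (hD : ↑D ⊆ Ico p q) {d : ℝ} (hd : d ∈ D) :
    ∀ x ∈ Ico d (nextPoint q D d), f x = x + (f d - d) := by
  obtain ⟨i, hdi⟩ := Fin.exists_mem_Ico_castSucc_succ pt (hp ▸ hq ▸ hD hd)
  obtain ⟨t, ht⟩ := htr i
  have hnext : nextPoint q D d ≤ pt i.succ := nextPoint_le (hptD _) hdi.2
  intro x hx
  rw [ht x ⟨hdi.1.trans hx.1, hx.2.trans_le hnext⟩, ht d hdi]
  ring

variable (hinj : InjOn f (Ico p q)) (hmaps : MapsTo f (Ico p q) (Ico p q))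
  (hD : ↑D ⊆ Ico p q) (hfD : MapsTo f D D)
  (htr : ∀ d ∈ D, ∀ x ∈ Ico d (nextPoint q D d), f x = x + (f d - d))
include hinj hmaps hD hfD htr

/-- Otherwise `f` would map a point strictly between `d` and `nextPoint q D d` onto
`nextPoint q D (f d)`, which is either `q` (not a value of `f` on `[p, q)`) or a point of `D`,
whose only preimage in `[p, q)` lies in `D`. -/
lemma nextPoint_sub_le_nextPoint_apply_sub {d : ℝ} (hd : d ∈ D) :
    nextPoint q D d - d ≤ nextPoint q D (f d) - f d := by
  by_contra! hlt
  have hd' := hD hd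
  set y := nextPoint q D (f d)
  have hfd : f d < q := (hmaps hd').2
  have hx : d + (y - f d) ∈ Ico d (nextPoint q D d) :=
    ⟨by linarith [lt_nextPoint (D := D) hfd], by linarith⟩
  have hfx : f (d + (y - f d)) = y := by rw [htr d hd _ hx]; ring
  have hxI : d + (y - f d) ∈ Ico p q :=
    ⟨hd'.1.trans hx.1, hx.2.trans_le (nextPoint_le_right hd'.2)⟩
  rcases Finset.mem_insert.mp (nextPoint_mem (D := D) hfd) with hy | hy
  · exact (hmaps hxI).2.ne (hfx.trans hy)
  · have hsurj : SurjOn f D D :=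
      ((D.finite_toSet.injOn_iff_bijOn_of_mapsTo hfD).mp (hinj.mono hD)).surjOn
    obtain ⟨z, hz, hfz⟩ := hsurj hy
    have hzx : z = d + (y - f d) := hinj (hD hz) hxI (hfz.trans hfx.symm)
    have hz_gt : d < z := by linarith [lt_nextPoint (D := D) hfd]
    exact (nextPoint_le (Finset.mem_insert_of_mem hz) hz_gt).not_gt (hzx ▸ hx.2)

theorem exists_isPieceExchange_nextPoint (hout : ∀ x, x ∉ Ico p q → f x = x)
    (hp : p ∈ insert q D) : ∃ σ : Equiv.Perm D,
      IsPieceExchange p q (fun d : D => (d : ℝ)) (fun d => nextPoint q D d - d) σ f := by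
  obtain ⟨σ, hσ⟩ : ∃ σ : Equiv.Perm D, ∀ d, (σ d : ℝ) = f d :=
    ⟨Equiv.ofBijective (fun d => ⟨f d, hfD d.2⟩) (Finite.injective_iff_bijective.mp
      fun d e hde => Subtype.ext (hinj (hD d.2) (hD e.2) (congrArg Subtype.val hde))),
      fun _ => rfl⟩
  refine ⟨σ, isPiecePacking_nextPoint hD, ?_, ?_, ?_⟩
  · refine σ.apply_eq_of_forall_le (w := fun d : D => nextPoint q D d - d) fun d => ?_
    simpa only [hσ] using nextPoint_sub_le_nextPoint_apply_sub hinj hmaps hD hfD htr d.2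
  · intro d x hx
    rw [hσ, htr d d.2 x (by simpa using hx)]
  · intro x hx
    refine hout x fun hxI => ?_
    obtain ⟨d, hd, hxd⟩ := exists_mem_Ico_nextPoint hp hxI
    exact hx ⟨d, hd⟩ (by simpa using hxd)

end IET

theorem finiteOrder_iet_eq_prod_swaps_general (p q : ℝ)
    (f : ℝ → ℝ) (hf : IsIET p q f)
    (hfin : ∃ n : ℕ, 0 < n ∧ f^[n] = id) :
    IsSwapProduct p q f := by
  obtain ⟨hbij, hout, m, pt, hpt, hp, hq, htr⟩ := hf
  obtain ⟨n, hn, hfn⟩ := hfin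
  obtain ⟨D, hBD, hD, hfD⟩ := exists_finset_superset_mapsTo_of_iterate_eq_id hn hfn
    (Finset.univ.image fun i : Fin m => pt i.castSucc) hbij.mapsTo (by
      intro _ hx
      obtain ⟨i, -, rfl⟩ := Finset.mem_image.mp (Finset.mem_coe.mp hx)
      rw [← hp, ← hq]
      exact ⟨hpt.monotone (Fin.zero_le _), hpt (Fin.castSucc_lt_last i)⟩)
  have hptD : ∀ i, pt i ∈ insert q D :=
    Fin.lastCases (by simp [hq]) fun i => Finset.mem_insert_of_mem (hBD (by simp))
  obtain ⟨σ, hσ⟩ := exists_isPieceExchange_nextPoint hbij.injOn hbij.mapsTo hD hfD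
    (fun d hd => apply_eq_of_mem_Ico_nextPoint hp hq htr hptD hD hd) hout (hp ▸ hptD 0)
  exact hσ.isSwapProduct

/-- Every interval exchange transformation of finite order is a finite
product of interval swap maps. -/
theorem finiteOrder_iet_eq_prod_swaps (p q : ℝ) (hpq : p < q)
    (f : ℝ → ℝ) (hf : IsIET p q f)
    (hfin : ∃ n : ℕ, 0 < n ∧ f^[n] = id) :
    IsSwapProduct p q f :=
  finiteOrder_iet_eq_prod_swaps_general p q f hf hfin
end

section
/- Every interval swap map is the commutator g^{-1} h^{-1} g h of two interval exchange transformations g, h each of order 2. -/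
open scoped TensorProduct

open scoped TensorProduct

lemma bijOn_of_invol (s : Set ℝ) (f : ℝ → ℝ) (hf : ∀ z, f (f z) = z)
    (hm : Set.MapsTo f s s) : Set.BijOn f s s :=
  ⟨hm, fun a _ b _ hab => by rw [← hf a, hab, hf],
    fun w hw => ⟨f w, hm hw, hf w⟩⟩

lemma isIET_of_finset (p q : ℝ) (f : ℝ → ℝ)
    (hbij : Set.BijOn f (Set.Ico p q) (Set.Ico p q))
    (hout : ∀ x, x ∉ Set.Ico p q → f x = x)
    (S : Finset ℝ) (hp : p ∈ S) (hq : ∀ s ∈ S, p ≤ s ∧ s < q)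
    (ht : ∀ u ∈ S, ∃ t : ℝ, ∀ z, u ≤ z → z < q →
      (∀ s ∈ S, s ≤ z → s ≤ u) → f z = z + t) :
    IsIET p q f := by
  refine ⟨hbij, hout, ?_⟩
  have hpq : p < q := (hq p hp).2
  classical
  set T : Finset ℝ := insert q S with hT
  have hqT : q ∈ T := Finset.mem_insert_self _ _
  obtain ⟨n, hn⟩ : ∃ n, T.card = n + 1 := by
    have := Finset.card_pos.mpr ⟨q, hqT⟩
    exact ⟨T.card - 1, by omega⟩
  set e := T.orderIsoOfFin hn with he
  have hmono : StrictMono (fun i : Fin (n+1) => (e i : ℝ)) := by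
    intro i j hij
    exact_mod_cast e.strictMono hij
  have hmem : ∀ i : Fin (n+1), (e i : ℝ) ∈ T := fun i => (e i).2
  have hple : ∀ s ∈ T, p ≤ s := by
    intro s hs
    rcases Finset.mem_insert.mp hs with rfl | hs
    · exact le_of_lt hpq
    · exact (hq s hs).1
  have hqle : ∀ s ∈ T, s ≤ q := by
    intro s hs
    rcases Finset.mem_insert.mp hs with rfl | hs
    · exact le_rfl
    · exact le_of_lt (hq s hs).2
  have h0 : (e 0 : ℝ) = p := by
    obtain ⟨k, hk⟩ := e.surjective ⟨p, Finset.mem_insert_of_mem hp⟩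
    have h1 : (e 0 : ℝ) ≤ (e k : ℝ) := by exact_mod_cast e.monotone (Fin.zero_le k)
    rw [hk] at h1
    exact le_antisymm h1 (hple _ (hmem 0))
  have hlast : (e (Fin.last n) : ℝ) = q := by
    obtain ⟨k, hk⟩ := e.surjective ⟨q, hqT⟩
    have h1 : (e k : ℝ) ≤ (e (Fin.last n) : ℝ) := by
      exact_mod_cast e.monotone (Fin.le_last k)
    rw [hk] at h1
    exact le_antisymm (hqle _ (hmem _)) h1
  refine ⟨n, fun i => (e i : ℝ), hmono, h0, hlast, ?_⟩
  intro i
  have huq : (e i.castSucc : ℝ) < q := by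
    rw [← hlast]; exact hmono (Fin.castSucc_lt_last i)
  have huS : (e i.castSucc : ℝ) ∈ S := by
    rcases Finset.mem_insert.mp (hmem i.castSucc) with h | h
    · exact absurd h (ne_of_lt huq)
    · exact h
  obtain ⟨t, htt⟩ := ht _ huS
  refine ⟨t, fun z hz => ?_⟩
  obtain ⟨hz1, hz2⟩ := hz
  have hzq : z < q := lt_of_lt_of_le hz2 (by rw [← hlast]; exact hmono.monotone (Fin.le_last _))
  refine htt z hz1 hzq ?_
  intro s hs hsz
  obtain ⟨j, hj⟩ := e.surjective ⟨s, Finset.mem_insert_of_mem hs⟩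
  have hjs : (e j : ℝ) = s := by rw [hj]
  rcases le_or_gt j i.castSucc with hle | hlt
  · rw [← hjs]; exact_mod_cast e.monotone hle
  · exfalso
    have h1 : (e i.succ : ℝ) ≤ (e j : ℝ) := by
      exact_mod_cast e.monotone (Fin.castSucc_lt_iff_succ_le.mp hlt)
    rw [hjs] at h1
    exact absurd (lt_of_le_of_lt (h1.trans hsz) hz2) (lt_irrefl _)

set_option linter.unusedVariables false

noncomputable def swapG (x y c : ℝ) (z : ℝ) : ℝ :=
  if x ≤ z ∧ z < x + c then z + (y - x)
  else if y ≤ z ∧ z < y + c then z - (y - x)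
  else z

noncomputable def swapH (x y c : ℝ) (z : ℝ) : ℝ :=
  if x ≤ z ∧ z < x + c then z + c
  else if x + c ≤ z ∧ z < x + 2*c then z - c
  else if y ≤ z ∧ z < y + c then z + c
  else if y + c ≤ z ∧ z < y + 2*c then z - c
  else z

lemma or_of_notMem {u v z : ℝ} (h : ¬(u ≤ z ∧ z < v)) : z < u ∨ v ≤ z := by
  rcases not_and_or.mp h with h | h
  · exact Or.inl (not_le.mp h)
  · exact Or.inr (not_lt.mp h)

section
variable {x y c : ℝ}

lemma swapG_1 (hc : 0 < c) (hxy : x + 2*c ≤ y) {z : ℝ}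
    (h1 : x ≤ z) (h2 : z < x + c) : swapG x y c z = z + (y - x) := by
  rw [swapG, if_pos ⟨h1, h2⟩]

lemma swapG_2 (hc : 0 < c) (hxy : x + 2*c ≤ y) {z : ℝ}
    (h1 : y ≤ z) (h2 : z < y + c) : swapG x y c z = z - (y - x) := by
  rw [swapG, if_neg (fun h => by linarith [h.2]), if_pos ⟨h1, h2⟩]

lemma swapG_0 (hc : 0 < c) (hxy : x + 2*c ≤ y) {z : ℝ}
    (h1 : z < x ∨ x + c ≤ z) (h2 : z < y ∨ y + c ≤ z) : swapG x y c z = z := by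
  rw [swapG, if_neg, if_neg]
  · rintro ⟨a1, a2⟩; rcases h2 with h | h <;> linarith
  · rintro ⟨a1, a2⟩; rcases h1 with h | h <;> linarith

lemma swapH_1 (hc : 0 < c) (hxy : x + 2*c ≤ y) {z : ℝ}
    (h1 : x ≤ z) (h2 : z < x + c) : swapH x y c z = z + c := by
  rw [swapH, if_pos ⟨h1, h2⟩]

lemma swapH_2 (hc : 0 < c) (hxy : x + 2*c ≤ y) {z : ℝ}
    (h1 : x + c ≤ z) (h2 : z < x + 2*c) : swapH x y c z = z - c := by
  rw [swapH, if_neg (fun h => by linarith [h.2]), if_pos ⟨h1, h2⟩]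

lemma swapH_3 (hc : 0 < c) (hxy : x + 2*c ≤ y) {z : ℝ}
    (h1 : y ≤ z) (h2 : z < y + c) : swapH x y c z = z + c := by
  rw [swapH, if_neg (fun h => by linarith [h.2]),
    if_neg (fun h => by linarith [h.2]), if_pos ⟨h1, h2⟩]

lemma swapH_4 (hc : 0 < c) (hxy : x + 2*c ≤ y) {z : ℝ}
    (h1 : y + c ≤ z) (h2 : z < y + 2*c) : swapH x y c z = z - c := by
  rw [swapH, if_neg (fun h => by linarith [h.2]),
    if_neg (fun h => by linarith [h.2]),
    if_neg (fun h => by linarith [h.2]), if_pos ⟨h1, h2⟩]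

lemma swapH_0 (hc : 0 < c) (hxy : x + 2*c ≤ y) {z : ℝ}
    (h1 : z < x ∨ x + 2*c ≤ z) (h2 : z < y ∨ y + 2*c ≤ z) :
    swapH x y c z = z := by
  rw [swapH, if_neg, if_neg, if_neg, if_neg]
  · rintro ⟨a1, a2⟩; rcases h2 with h | h <;> linarith
  · rintro ⟨a1, a2⟩; rcases h2 with h | h <;> linarith
  · rintro ⟨a1, a2⟩; rcases h1 with h | h <;> linarith
  · rintro ⟨a1, a2⟩; rcases h1 with h | h <;> linarith

lemma swapG_invol (hc : 0 < c) (hxy : x + 2*c ≤ y) (z : ℝ) :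
    swapG x y c (swapG x y c z) = z := by
  by_cases h1 : x ≤ z ∧ z < x + c
  · rw [swapG_1 hc hxy h1.1 h1.2,
      swapG_2 hc hxy (by linarith [h1.1]) (by linarith [h1.2])]
    ring
  by_cases h2 : y ≤ z ∧ z < y + c
  · rw [swapG_2 hc hxy h2.1 h2.2,
      swapG_1 hc hxy (by linarith [h2.1]) (by linarith [h2.2])]
    ring
  · rw [swapG_0 hc hxy (or_of_notMem h1) (or_of_notMem h2),
      swapG_0 hc hxy (or_of_notMem h1) (or_of_notMem h2)]

lemma swapH_invol (hc : 0 < c) (hxy : x + 2*c ≤ y) (z : ℝ) :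
    swapH x y c (swapH x y c z) = z := by
  by_cases h1 : x ≤ z ∧ z < x + c
  · rw [swapH_1 hc hxy h1.1 h1.2,
      swapH_2 hc hxy (by linarith [h1.1]) (by linarith [h1.2])]
    ring
  by_cases h2 : x + c ≤ z ∧ z < x + 2*c
  · rw [swapH_2 hc hxy h2.1 h2.2,
      swapH_1 hc hxy (by linarith [h2.1]) (by linarith [h2.2])]
    ring
  by_cases h3 : y ≤ z ∧ z < y + c
  · rw [swapH_3 hc hxy h3.1 h3.2,
      swapH_4 hc hxy (by linarith [h3.1]) (by linarith [h3.2])]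
    ring
  by_cases h4 : y + c ≤ z ∧ z < y + 2*c
  · rw [swapH_4 hc hxy h4.1 h4.2,
      swapH_3 hc hxy (by linarith [h4.1]) (by linarith [h4.2])]
    ring
  · have o1 : z < x ∨ x + 2*c ≤ z := by
      rcases or_of_notMem h1 with h | h
      · exact Or.inl h
      · rcases or_of_notMem h2 with h' | h'
        · linarith
        · exact Or.inr h'
    have o2 : z < y ∨ y + 2*c ≤ z := by
      rcases or_of_notMem h3 with h | h
      · exact Or.inl h
      · rcases or_of_notMem h4 with h' | h'
        · linarith
        · exact Or.inr h'
    rw [swapH_0 hc hxy o1 o2, swapH_0 hc hxy o1 o2]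

end

/-- Every interval swap map is the commutator `g⁻¹ ∘ h⁻¹ ∘ g ∘ h` of two
interval exchange transformations `g, h` of order `2`. -/
theorem swap_eq_commutator_of_involutions (p q a : ℝ) (f : ℝ → ℝ)
    (hf : IsIntervalSwap p q a f) :
    ∃ g h : ℝ → ℝ, IsIET p q g ∧ IsIET p q h ∧
      g ∘ g = id ∧ g ≠ id ∧ h ∘ h = id ∧ h ≠ id ∧
      f = g ∘ h ∘ g ∘ h := by
  classical
  obtain ⟨ha, x, y, hpx, hxy0, hyq0, hf1, hf2, hf3⟩ := hf
  set c : ℝ := a / 2 with hcdef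
  have hc : 0 < c := by rw [hcdef]; linarith
  have hac : a = 2 * c := by rw [hcdef]; ring
  rw [hac] at hxy0 hyq0 hf1 hf2 hf3
  have hxy : x + 2*c ≤ y := hxy0
  have hyq : y + 2*c ≤ q := hyq0
  have hpq : p < q := by linarith
  have hgmaps : Set.MapsTo (swapG x y c) (Set.Ico p q) (Set.Ico p q) := by
    intro z hz
    rw [Set.mem_Ico] at hz ⊢
    by_cases h1 : x ≤ z ∧ z < x + c
    · rw [swapG_1 hc hxy h1.1 h1.2]; constructor <;> linarith [h1.1, h1.2]
    by_cases h2 : y ≤ z ∧ z < y + c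
    · rw [swapG_2 hc hxy h2.1 h2.2]; constructor <;> linarith [h2.1, h2.2]
    · rw [swapG_0 hc hxy (or_of_notMem h1) (or_of_notMem h2)]
      exact hz
  have hhmaps : Set.MapsTo (swapH x y c) (Set.Ico p q) (Set.Ico p q) := by
    intro z hz
    rw [Set.mem_Ico] at hz ⊢
    by_cases h1 : x ≤ z ∧ z < x + c
    · rw [swapH_1 hc hxy h1.1 h1.2]; constructor <;> linarith [h1.1, h1.2]
    by_cases h2 : x + c ≤ z ∧ z < x + 2*c
    · rw [swapH_2 hc hxy h2.1 h2.2]; constructor <;> linarith [h2.1, h2.2]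
    by_cases h3 : y ≤ z ∧ z < y + c
    · rw [swapH_3 hc hxy h3.1 h3.2]; constructor <;> linarith [h3.1, h3.2]
    by_cases h4 : y + c ≤ z ∧ z < y + 2*c
    · rw [swapH_4 hc hxy h4.1 h4.2]; constructor <;> linarith [h4.1, h4.2]
    · have o1 : z < x ∨ x + 2*c ≤ z := by
        rcases or_of_notMem h1 with h | h
        · exact Or.inl h
        · rcases or_of_notMem h2 with h' | h'
          · linarith
          · exact Or.inr h'
      have o2 : z < y ∨ y + 2*c ≤ z := by
        rcases or_of_notMem h3 with h | h
        · exact Or.inl h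
        · rcases or_of_notMem h4 with h' | h'
          · linarith
          · exact Or.inr h'
      rw [swapH_0 hc hxy o1 o2]; exact hz
  have hgout : ∀ z, z ∉ Set.Ico p q → swapG x y c z = z := by
    intro z hz
    rw [Set.mem_Ico] at hz
    rcases or_of_notMem hz with h | h
    · exact swapG_0 hc hxy (Or.inl (by linarith)) (Or.inl (by linarith))
    · exact swapG_0 hc hxy (Or.inr (by linarith)) (Or.inr (by linarith))
  have hhout : ∀ z, z ∉ Set.Ico p q → swapH x y c z = z := by
    intro z hz
    rw [Set.mem_Ico] at hz
    rcases or_of_notMem hz with h | h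
    · exact swapH_0 hc hxy (Or.inl (by linarith)) (Or.inl (by linarith))
    · exact swapH_0 hc hxy (Or.inr (by linarith)) (Or.inr (by linarith))
  have hgIET : IsIET p q (swapG x y c) := by
    apply isIET_of_finset p q _
      (bijOn_of_invol _ _ (swapG_invol hc hxy) hgmaps) hgout
      (insert p {x, x + c, y, y + c}) (Finset.mem_insert_self _ _)
    · intro s hs
      simp only [Finset.mem_insert, Finset.mem_singleton] at hs
      rcases hs with rfl | rfl | rfl | rfl | rfl <;> constructor <;> linarith
    · intro u hu
      have memS : ∀ w : ℝ, (w = x ∨ w = x + c ∨ w = y ∨ w = y + c) →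
          w ∈ insert p ({x, x + c, y, y + c} : Finset ℝ) := by
        intro w hw
        simp only [Finset.mem_insert, Finset.mem_singleton]
        tauto
      simp only [Finset.mem_insert, Finset.mem_singleton] at hu
      rcases hu with hu | hu | hu | hu | hu
      · -- u = p
        rcases eq_or_lt_of_le hpx with hpe | hpl
        · refine ⟨y - x, fun z hz1 hz2 hcons => ?_⟩
          rw [hu] at hz1 hcons
          have hzx : x ≤ z := hpe ▸ hz1
          have hzxc : z < x + c := by
            by_contra hcon
            push_neg at hcon
            have h5 := hcons (x + c) (memS (x + c) (by tauto)) hcon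
            rw [hpe] at h5
            linarith
          exact swapG_1 hc hxy hzx hzxc
        · refine ⟨0, fun z hz1 hz2 hcons => ?_⟩
          rw [hu] at hz1 hcons
          have hzx : z < x := by
            by_contra hcon
            push_neg at hcon
            have h5 := hcons x (memS x (by tauto)) hcon
            linarith
          rw [swapG_0 hc hxy (Or.inl hzx) (Or.inl (by linarith))]; ring
      · -- u = x
        refine ⟨y - x, fun z hz1 hz2 hcons => ?_⟩
        rw [hu] at hz1 hcons
        have hzxc : z < x + c := by
          by_contra hcon
          push_neg at hcon
          have h5 := hcons (x + c) (memS (x + c) (by tauto)) hcon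
          linarith
        exact swapG_1 hc hxy hz1 hzxc
      · -- u = x + c
        refine ⟨0, fun z hz1 hz2 hcons => ?_⟩
        rw [hu] at hz1 hcons
        have hzy : z < y := by
          by_contra hcon
          push_neg at hcon
          have h5 := hcons y (memS y (by tauto)) hcon
          linarith
        rw [swapG_0 hc hxy (Or.inr hz1) (Or.inl hzy)]; ring
      · -- u = y
        refine ⟨x - y, fun z hz1 hz2 hcons => ?_⟩
        rw [hu] at hz1 hcons
        have hzyc : z < y + c := by
          by_contra hcon
          push_neg at hcon
          have h5 := hcons (y + c) (memS (y + c) (by tauto)) hcon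
          linarith
        rw [swapG_2 hc hxy hz1 hzyc]; ring
      · -- u = y + c
        refine ⟨0, fun z hz1 hz2 hcons => ?_⟩
        rw [hu] at hz1 hcons
        rw [swapG_0 hc hxy (Or.inr (by linarith)) (Or.inr hz1)]; ring
  have hhIET : IsIET p q (swapH x y c) := by
    apply isIET_of_finset p q _
      (bijOn_of_invol _ _ (swapH_invol hc hxy) hhmaps) hhout
      (insert p (({x, x + c, x + 2*c, y, y + c, y + 2*c} : Finset ℝ).filter (· < q)))
      (Finset.mem_insert_self _ _)
    · intro s hs
      simp only [Finset.mem_insert, Finset.mem_filter, Finset.mem_singleton] at hs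
      rcases hs with rfl | ⟨h6, hlt⟩
      · exact ⟨le_rfl, hpq⟩
      · rcases h6 with rfl | rfl | rfl | rfl | rfl | rfl <;> exact ⟨by linarith, hlt⟩
    · intro u hu
      have memS : ∀ w : ℝ,
          (w = x ∨ w = x + c ∨ w = x + 2*c ∨ w = y ∨ w = y + c ∨ w = y + 2*c) →
          w < q →
          w ∈ insert p (({x, x + c, x + 2*c, y, y + c, y + 2*c} : Finset ℝ).filter (· < q)) := by
        intro w hw hwq
        refine Finset.mem_insert_of_mem (Finset.mem_filter.mpr ⟨?_, hwq⟩)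
        simp only [Finset.mem_insert, Finset.mem_singleton]
        tauto
      simp only [Finset.mem_insert, Finset.mem_filter, Finset.mem_singleton] at hu
      rcases hu with hu | ⟨hu6, huq⟩
      · -- u = p
        rcases eq_or_lt_of_le hpx with hpe | hpl
        · refine ⟨c, fun z hz1 hz2 hcons => ?_⟩
          rw [hu] at hz1 hcons
          have hzx : x ≤ z := hpe ▸ hz1
          have hzxc : z < x + c := by
            by_contra hcon
            push_neg at hcon
            have h5 := hcons (x + c) (memS (x + c) (by tauto) (by linarith)) hcon
            rw [hpe] at h5
            linarith
          exact swapH_1 hc hxy hzx hzxc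
        · refine ⟨0, fun z hz1 hz2 hcons => ?_⟩
          rw [hu] at hz1 hcons
          have hzx : z < x := by
            by_contra hcon
            push_neg at hcon
            have h5 := hcons x (memS x (by tauto) (by linarith)) hcon
            linarith
          rw [swapH_0 hc hxy (Or.inl hzx) (Or.inl (by linarith))]; ring
      rcases hu6 with hu | hu | hu | hu | hu | hu
      · -- u = x
        refine ⟨c, fun z hz1 hz2 hcons => ?_⟩
        rw [hu] at hz1 hcons
        have hzxc : z < x + c := by
          by_contra hcon
          push_neg at hcon
          have h5 := hcons (x + c) (memS (x + c) (by tauto) (by linarith)) hcon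
          linarith
        exact swapH_1 hc hxy hz1 hzxc
      · -- u = x + c
        refine ⟨-c, fun z hz1 hz2 hcons => ?_⟩
        rw [hu] at hz1 hcons
        have hzxc : z < x + 2*c := by
          by_contra hcon
          push_neg at hcon
          have h5 := hcons (x + 2*c) (memS (x + 2*c) (by tauto) (by linarith)) hcon
          linarith
        rw [swapH_2 hc hxy hz1 hzxc]; ring
      · -- u = x + 2*c
        rcases eq_or_lt_of_le hxy with hey | hlty
        · refine ⟨c, fun z hz1 hz2 hcons => ?_⟩
          rw [hu] at hz1 hcons
          have hzy : y ≤ z := by rw [← hey]; exact hz1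
          have hzyc : z < y + c := by
            by_contra hcon
            push_neg at hcon
            have h5 := hcons (y + c) (memS (y + c) (by tauto) (by linarith)) hcon
            rw [← hey] at h5
            linarith
          exact swapH_3 hc hxy hzy hzyc
        · refine ⟨0, fun z hz1 hz2 hcons => ?_⟩
          rw [hu] at hz1 hcons
          have hzy : z < y := by
            by_contra hcon
            push_neg at hcon
            have h5 := hcons y (memS y (by tauto) (by linarith)) hcon
            linarith
          rw [swapH_0 hc hxy (Or.inr hz1) (Or.inl hzy)]; ring
      · -- u = y
        refine ⟨c, fun z hz1 hz2 hcons => ?_⟩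
        rw [hu] at hz1 hcons
        have hzyc : z < y + c := by
          by_contra hcon
          push_neg at hcon
          have h5 := hcons (y + c) (memS (y + c) (by tauto) (by linarith)) hcon
          linarith
        exact swapH_3 hc hxy hz1 hzyc
      · -- u = y + c
        refine ⟨-c, fun z hz1 hz2 hcons => ?_⟩
        rw [hu] at hz1 hcons
        have hzyc : z < y + 2*c := by
          rcases lt_or_ge (y + 2*c) q with hlt | hle
          · by_contra hcon
            push_neg at hcon
            have h5 := hcons (y + 2*c) (memS (y + 2*c) (by tauto) hlt) hcon
            linarith
          · linarith
        rw [swapH_4 hc hxy hz1 hzyc]; ring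
      · -- u = y + 2*c
        refine ⟨0, fun z hz1 hz2 hcons => ?_⟩
        rw [hu] at hz1 hcons
        rw [swapH_0 hc hxy (Or.inr (by linarith)) (Or.inr hz1)]; ring
  refine ⟨swapG x y c, swapH x y c, hgIET, hhIET, ?_, ?_, ?_, ?_, ?_⟩
  · funext z; simpa using swapG_invol hc hxy z
  · intro hgid
    have h5 := congrFun hgid x
    rw [swapG_1 hc hxy le_rfl (by linarith)] at h5
    simp only [id_eq] at h5
    linarith
  · funext z; simpa using swapH_invol hc hxy z
  · intro hhid
    have h5 := congrFun hhid x
    rw [swapH_1 hc hxy le_rfl (by linarith)] at h5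
    simp only [id_eq] at h5
    linarith
  · funext z
    simp only [Function.comp_apply]
    by_cases h1 : x ≤ z ∧ z < x + c
    · obtain ⟨za, zb⟩ := h1
      have e1 : swapH x y c z = z + c := swapH_1 hc hxy za zb
      have e2 : swapG x y c (z + c) = z + c :=
        swapG_0 hc hxy (Or.inr (by linarith)) (Or.inl (by linarith))
      have e3 : swapH x y c (z + c) = z + c - c :=
        swapH_2 hc hxy (by linarith) (by linarith)
      have e4 : swapG x y c (z + c - c) = z + c - c + (y - x) :=
        swapG_1 hc hxy (by linarith) (by linarith)
      rw [e1, e2, e3, e4, hf1 z ⟨za, by linarith⟩]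
      ring
    by_cases h2 : x + c ≤ z ∧ z < x + 2*c
    · obtain ⟨za, zb⟩ := h2
      have e1 : swapH x y c z = z - c := swapH_2 hc hxy za zb
      have e2 : swapG x y c (z - c) = z - c + (y - x) :=
        swapG_1 hc hxy (by linarith) (by linarith)
      have e3 : swapH x y c (z - c + (y - x)) = z - c + (y - x) + c :=
        swapH_3 hc hxy (by linarith) (by linarith)
      have e4 : swapG x y c (z - c + (y - x) + c) = z - c + (y - x) + c :=
        swapG_0 hc hxy (Or.inr (by linarith)) (Or.inr (by linarith))
      rw [e1, e2, e3, e4, hf1 z ⟨by linarith, by linarith⟩]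
      ring
    by_cases h3 : y ≤ z ∧ z < y + c
    · obtain ⟨za, zb⟩ := h3
      have e1 : swapH x y c z = z + c := swapH_3 hc hxy za zb
      have e2 : swapG x y c (z + c) = z + c :=
        swapG_0 hc hxy (Or.inr (by linarith)) (Or.inr (by linarith))
      have e3 : swapH x y c (z + c) = z + c - c :=
        swapH_4 hc hxy (by linarith) (by linarith)
      have e4 : swapG x y c (z + c - c) = z + c - c - (y - x) :=
        swapG_2 hc hxy (by linarith) (by linarith)
      rw [e1, e2, e3, e4, hf2 z ⟨za, by linarith⟩]
      ring
    by_cases h4 : y + c ≤ z ∧ z < y + 2*c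
    · obtain ⟨za, zb⟩ := h4
      have e1 : swapH x y c z = z - c := swapH_4 hc hxy za zb
      have e2 : swapG x y c (z - c) = z - c - (y - x) :=
        swapG_2 hc hxy (by linarith) (by linarith)
      have e3 : swapH x y c (z - c - (y - x)) = z - c - (y - x) + c :=
        swapH_1 hc hxy (by linarith) (by linarith)
      have e4 : swapG x y c (z - c - (y - x) + c) = z - c - (y - x) + c :=
        swapG_0 hc hxy (Or.inr (by linarith)) (Or.inl (by linarith))
      rw [e1, e2, e3, e4, hf2 z ⟨by linarith, zb⟩]
      ring
    · have o1 : z < x ∨ x + 2*c ≤ z := by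
        rcases or_of_notMem h1 with h | h
        · exact Or.inl h
        · rcases or_of_notMem h2 with h' | h'
          · linarith
          · exact Or.inr h'
      have o2 : z < y ∨ y + 2*c ≤ z := by
        rcases or_of_notMem h3 with h | h
        · exact Or.inl h
        · rcases or_of_notMem h4 with h' | h'
          · linarith
          · exact Or.inr h'
      have o1' : z < x ∨ x + c ≤ z := by
        rcases o1 with h | h
        · exact Or.inl h
        · exact Or.inr (by linarith)
      have o2' : z < y ∨ y + c ≤ z := by
        rcases o2 with h | h
        · exact Or.inl h
        · exact Or.inr (by linarith)
      have hmem : z ∉ Set.Ico x (x + 2*c) ∪ Set.Ico y (y + 2*c) := by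
        rintro (⟨u1, u2⟩ | ⟨u1, u2⟩)
        · rcases o1 with h | h <;> linarith
        · rcases o2 with h | h <;> linarith
      have e0 : swapH x y c z = z := swapH_0 hc hxy o1 o2
      have e0' : swapG x y c z = z := swapG_0 hc hxy o1' o2'
      rw [e0, e0', e0, e0']
      exact hf3 z hmem
end

section
/- If f_1 and f_2 are interval swap maps of the same type a whose supports are disjoint, then there exists an interval exchange transformation g of order 2 such that f_2 = g f_1 g. -/
open scoped TensorProduct

/-!
Write `f₁` as the swap of `I₁ = [x₁, x₁+a)` with `J₁ = [y₁, y₁+a)` and `f₂` as the swap of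
`I₂` with `J₂`. Disjointness of the supports makes the four intervals pairwise disjoint, so
`g := (I₁ ↔ I₂) ∘ (J₁ ↔ J₂)` is a product of two commuting involutive swaps, hence an involutive
interval exchange. Any involution translating `I₁` onto `I₂` and `J₁` onto `J₂` conjugates the
swap of `I₁, J₁` into the swap of `I₂, J₂`.
-/

open Set Function

-- Intended for disjoint intervals; if they overlap, the first branch wins.
open Classical in
noncomputable def intervalSwap (a x y z : ℝ) : ℝ :=
  if z ∈ Ico x (x + a) then z + (y - x) else if z ∈ Ico y (y + a) then z + (x - y) else z

section IntervalSwap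

variable {a x y z : ℝ}

theorem add_sub_mem_Ico (hz : z ∈ Ico x (x + a)) : z + (y - x) ∈ Ico y (y + a) :=
  ⟨by linarith [hz.1], by linarith [hz.2]⟩

theorem Ico_disjoint_Ico_of_add_le (h : x + a ≤ y) :
    Disjoint (Ico x (x + a)) (Ico y (y + a)) :=
  Ico_disjoint_Ico_same.mono_left (Ico_subset_Ico le_rfl h)

theorem intervalSwap_of_mem_left (hz : z ∈ Ico x (x + a)) :
    intervalSwap a x y z = z + (y - x) := by
  simp only [intervalSwap, if_pos hz]

theorem intervalSwap_of_notMem_of_mem (hx : z ∉ Ico x (x + a)) (hy : z ∈ Ico y (y + a)) :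
    intervalSwap a x y z = z + (x - y) := by
  simp only [intervalSwap, if_neg hx, if_pos hy]

theorem intervalSwap_of_mem_right (hd : Disjoint (Ico x (x + a)) (Ico y (y + a)))
    (hz : z ∈ Ico y (y + a)) : intervalSwap a x y z = z + (x - y) :=
  intervalSwap_of_notMem_of_mem (hd.notMem_of_mem_right hz) hz

theorem intervalSwap_of_notMem (hx : z ∉ Ico x (x + a)) (hy : z ∉ Ico y (y + a)) :
    intervalSwap a x y z = z := by
  simp only [intervalSwap, if_neg hx, if_neg hy]

theorem intervalSwap_eq_self_of_notMem {s : Set ℝ} (hx : Ico x (x + a) ⊆ s)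
    (hy : Ico y (y + a) ⊆ s) (hz : z ∉ s) : intervalSwap a x y z = z :=
  intervalSwap_of_notMem (fun h => hz (hx h)) (fun h => hz (hy h))

theorem intervalSwap_involutive (hd : Disjoint (Ico x (x + a)) (Ico y (y + a))) :
    Involutive (intervalSwap a x y) := by
  intro z
  by_cases hx : z ∈ Ico x (x + a)
  · rw [intervalSwap_of_mem_left hx, intervalSwap_of_mem_right hd (add_sub_mem_Ico hx)]
    ring
  by_cases hy : z ∈ Ico y (y + a)
  · rw [intervalSwap_of_notMem_of_mem hx hy, intervalSwap_of_mem_left (add_sub_mem_Ico hy)]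
    ring
  · rw [intervalSwap_of_notMem hx hy, intervalSwap_of_notMem hx hy]

theorem support_intervalSwap (hd : Disjoint (Ico x (x + a)) (Ico y (y + a))) :
    {z | intervalSwap a x y z ≠ z} = Ico x (x + a) ∪ Ico y (y + a) := by
  ext z
  by_cases hx : z ∈ Ico x (x + a)
  · have hxy : y ≠ x := fun h => hd.notMem_of_mem_left hx (h ▸ hx)
    simp [intervalSwap_of_mem_left hx, hx, sub_eq_zero, hxy]
  by_cases hy : z ∈ Ico y (y + a)
  · have hxy : x ≠ y := fun h => hd.notMem_of_mem_left (h ▸ hy) hy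
    simp [intervalSwap_of_notMem_of_mem hx hy, hy, sub_eq_zero, hxy]
  · simp [intervalSwap_of_notMem hx hy, hx, hy]

end IntervalSwap

theorem IsIntervalSwap.exists_eq_intervalSwap {p q a : ℝ} {f : ℝ → ℝ}
    (h : IsIntervalSwap p q a f) :
    0 < a ∧ ∃ x y, p ≤ x ∧ x + a ≤ y ∧ y + a ≤ q ∧ f = intervalSwap a x y := by
  obtain ⟨ha, x, y, hpx, hxy, hyq, hX, hY, hout⟩ := h
  refine ⟨ha, x, y, hpx, hxy, hyq, funext fun z => ?_⟩
  by_cases hx : z ∈ Ico x (x + a)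
  · rw [hX z hx, intervalSwap_of_mem_left hx]
  by_cases hy : z ∈ Ico y (y + a)
  · rw [hY z hy, intervalSwap_of_notMem_of_mem hx hy]
    ring
  · rw [hout z (by simp [hx, hy]), intervalSwap_of_notMem hx hy]

def IsPiecewiseTranslation (S : Set ℝ) (f : ℝ → ℝ) : Prop :=
  ∀ c d, Disjoint (Ioo c d) S → ∃ t, EqOn f (· + t) (Ico c d)

theorem IsPiecewiseTranslation.mono {S T : Set ℝ} {f : ℝ → ℝ}
    (h : IsPiecewiseTranslation S f) (hST : S ⊆ T) : IsPiecewiseTranslation T f :=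
  fun c d hcd => h c d (hcd.mono_right hST)

theorem Ico_subset_or_disjoint_of_notMem_Ioo {α : Type*} [LinearOrder α] {c d u v : α}
    (hu : u ∉ Ioo c d) (hv : v ∉ Ioo c d) : Ico c d ⊆ Ico u v ∨ Disjoint (Ico c d) (Ico u v) := by
  refine or_iff_not_imp_right.2 fun h => ?_
  obtain ⟨z, ⟨hcz, hzd⟩, huz, hzv⟩ := not_disjoint_iff.1 h
  have huc : u ≤ c := not_lt.1 fun hcu => hu ⟨hcu, huz.trans_lt hzd⟩
  have hdv : d ≤ v := not_lt.1 fun hvd => hv ⟨hcz.trans_lt hzv, hvd⟩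
  exact Ico_subset_Ico huc hdv

theorem isPiecewiseTranslation_intervalSwap (a x y : ℝ) :
    IsPiecewiseTranslation {x, x + a, y, y + a} (intervalSwap a x y) := by
  intro c d hcd
  have hcd' : ∀ s ∈ ({x, x + a, y, y + a} : Set ℝ), s ∉ Ioo c d := fun s hs h =>
    hcd.notMem_of_mem_left h hs
  rcases Ico_subset_or_disjoint_of_notMem_Ioo (hcd' x (by simp)) (hcd' (x + a) (by simp))
    with hX | hX
  · exact ⟨y - x, fun z hz => intervalSwap_of_mem_left (hX hz)⟩
  rcases Ico_subset_or_disjoint_of_notMem_Ioo (hcd' y (by simp)) (hcd' (y + a) (by simp))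
    with hY | hY
  · exact ⟨x - y, fun z hz => intervalSwap_of_notMem_of_mem (hX.notMem_of_mem_left hz) (hY hz)⟩
  · exact ⟨0, fun z hz => by
      simp [intervalSwap_of_notMem (hX.notMem_of_mem_left hz) (hY.notMem_of_mem_left hz)]⟩

section Involution

variable {α : Type*} {σ τ : α → α}

theorem Function.Involutive.apply_eq_self_of_disjoint (hτ : Involutive τ)
    (h : Disjoint {x | σ x ≠ x} {x | τ x ≠ x}) {z : α} (hz : τ z ≠ z) : σ (τ z) = τ z :=
  not_not.1 fun hσ => h.notMem_of_mem_left hσ (by simpa [hτ z] using hz.symm)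

theorem Function.Involutive.commute_of_disjoint (hσ : Involutive σ) (hτ : Involutive τ)
    (h : Disjoint {x | σ x ≠ x} {x | τ x ≠ x}) : Function.Commute σ τ := by
  intro z
  show σ (τ z) = τ (σ z)
  by_cases hτz : τ z = z
  · rw [hτz]
    by_cases hσz : σ z = z
    · rw [hσz, hτz]
    · exact (hσ.apply_eq_self_of_disjoint h.symm hσz).symm
  · rw [hτ.apply_eq_self_of_disjoint h hτz,
      not_not.1 fun hσz => h.notMem_of_mem_left hσz hτz]

theorem Function.Involutive.comp_of_disjoint (hσ : Involutive σ) (hτ : Involutive τ)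
    (h : Disjoint {x | σ x ≠ x} {x | τ x ≠ x}) : Involutive (σ ∘ τ) := fun z => by
  simp only [comp_apply]
  rw [← (hσ.commute_of_disjoint hτ h).eq (τ z), hσ, hτ]

end Involution

theorem IsPiecewiseTranslation.comp {S T : Set ℝ} {σ τ : ℝ → ℝ}
    (hσ : IsPiecewiseTranslation S σ) (hτ : IsPiecewiseTranslation T τ) (hτ' : Involutive τ)
    (h : Disjoint {x | σ x ≠ x} {x | τ x ≠ x}) : IsPiecewiseTranslation (S ∪ T) (σ ∘ τ) := by
  intro c d hcd
  obtain ⟨s, hs⟩ := hσ c d (hcd.mono_right subset_union_left)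
  obtain ⟨t, ht⟩ := hτ c d (hcd.mono_right subset_union_right)
  by_cases ht0 : t = 0
  · refine ⟨s, fun z hz => ?_⟩
    simp [ht hz, ht0, hs hz]
  · refine ⟨t, fun z hz => ?_⟩
    have hτz : τ z ≠ z := by simp [ht hz, ht0]
    rw [comp_apply, hτ'.apply_eq_self_of_disjoint h hτz, ht hz]

theorem Set.Finite.exists_strictMono_fin {α : Type*} [LinearOrder α] {S : Set α}
    (hS : S.Finite) {p q : α} (hp : p ∈ S) (hq : q ∈ S) (hSpq : S ⊆ Icc p q) :
    ∃ (n : ℕ) (pt : Fin (n + 1) → α), StrictMono pt ∧ pt 0 = p ∧ pt (Fin.last n) = q ∧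
      ∀ i : Fin n, Disjoint (Ioo (pt i.castSucc) (pt i.succ)) S := by
  set F := hS.toFinset
  have hF : F.Nonempty := ⟨p, hS.mem_toFinset.2 hp⟩
  have hcard : F.card = F.card - 1 + 1 := (Nat.succ_pred_eq_of_pos hF.card_pos).symm
  set pt := F.orderEmbOfFin hcard
  refine ⟨F.card - 1, pt, pt.strictMono, ?_, ?_, fun i => ?_⟩
  · rw [show (0 : Fin (F.card - 1 + 1)) = ⟨0, by omega⟩ from rfl, Finset.orderEmbOfFin_zero]
    exact le_antisymm (F.min'_le p (hS.mem_toFinset.2 hp))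
      (Finset.le_min' _ _ _ fun s hs => (hSpq (hS.mem_toFinset.1 hs)).1)
  · rw [show Fin.last (F.card - 1) = ⟨F.card - 1 + 1 - 1, by omega⟩ from rfl,
      Finset.orderEmbOfFin_last _ (Nat.succ_pos _)]
    exact le_antisymm (Finset.max'_le _ _ _ fun s hs => (hSpq (hS.mem_toFinset.1 hs)).2)
      (F.le_max' q (hS.mem_toFinset.2 hq))
  · refine disjoint_left.2 fun s ⟨hl, hr⟩ hs => ?_
    obtain ⟨j, rfl⟩ : s ∈ range pt := by simpa [pt, F] using hs
    exact (Fin.castSucc_lt_iff_succ_le.1 (pt.lt_iff_lt.1 hl)).not_gt (pt.lt_iff_lt.1 hr)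

theorem isIET_of_involutive {p q : ℝ} {g : ℝ → ℝ} {S : Set ℝ} (hg : Involutive g)
    (hout : ∀ x ∉ Ico p q, g x = x) (hS : S.Finite) (hp : p ∈ S) (hq : q ∈ S)
    (hSpq : S ⊆ Icc p q) (hpw : IsPiecewiseTranslation S g) : IsIET p q g := by
  -- If `g z` left `[p, q)` it would be fixed by `g`, so `z = g (g z) = g z`.
  have hmaps : MapsTo g (Ico p q) (Ico p q) := fun z hz =>
    not_not.1 fun hgz => hgz (by rwa [← hout _ hgz, hg z])
  obtain ⟨n, pt, hmono, h0, hlast, hpt⟩ := hS.exists_strictMono_fin hp hq hSpq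
  refine ⟨InvOn.bijOn ⟨fun z _ => hg z, fun z _ => hg z⟩ hmaps hmaps, hout,
    n, pt, hmono, h0, hlast, fun i => ?_⟩
  obtain ⟨t, ht⟩ := hpw _ _ (hpt i)
  exact ⟨t, fun z hz => ht hz⟩

section Conjugation

variable {a x₁ y₁ x₂ y₂ z : ℝ} {g : ℝ → ℝ}

theorem Function.Involutive.apply_of_mem_Ico (hg : Involutive g)
    (h : EqOn g (· + (x₂ - x₁)) (Ico x₁ (x₁ + a))) (hz : z ∈ Ico x₂ (x₂ + a)) :
    g z = z + (x₁ - x₂) := by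
  have hw : g (z + (x₁ - x₂)) = z := by
    rw [h (add_sub_mem_Ico hz)]
    ring
  calc g z = g (g (z + (x₁ - x₂))) := by rw [hw]
    _ = z + (x₁ - x₂) := hg _

theorem Function.Involutive.mem_Ico_of_apply_mem (hg : Involutive g)
    (h : EqOn g (· + (x₂ - x₁)) (Ico x₁ (x₁ + a))) (hz : g z ∈ Ico x₁ (x₁ + a)) :
    z ∈ Ico x₂ (x₂ + a) := by
  rw [← hg z, h hz]
  exact add_sub_mem_Ico hz

theorem comp_intervalSwap_comp (hg : Involutive g)
    (hd : Disjoint (Ico x₁ (x₁ + a)) (Ico y₁ (y₁ + a)))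
    (hx : EqOn g (· + (x₂ - x₁)) (Ico x₁ (x₁ + a)))
    (hy : EqOn g (· + (y₂ - y₁)) (Ico y₁ (y₁ + a))) :
    g ∘ intervalSwap a x₁ y₁ ∘ g = intervalSwap a x₂ y₂ := by
  funext z
  simp only [comp_apply]
  by_cases hzx : z ∈ Ico x₂ (x₂ + a)
  · have hgz := hg.apply_of_mem_Ico hx hzx
    have hgzx : g z ∈ Ico x₁ (x₁ + a) := hgz ▸ add_sub_mem_Ico hzx
    rw [intervalSwap_of_mem_left hgzx, hy (add_sub_mem_Ico hgzx), intervalSwap_of_mem_left hzx,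
      hgz]
    ring
  by_cases hzy : z ∈ Ico y₂ (y₂ + a)
  · have hgz := hg.apply_of_mem_Ico hy hzy
    have hgzy : g z ∈ Ico y₁ (y₁ + a) := hgz ▸ add_sub_mem_Ico hzy
    rw [intervalSwap_of_mem_right hd hgzy, hx (add_sub_mem_Ico hgzy),
      intervalSwap_of_notMem_of_mem hzx hzy, hgz]
    ring
  · rw [intervalSwap_of_notMem (fun h => hzx (hg.mem_Ico_of_apply_mem hx h))
      (fun h => hzy (hg.mem_Ico_of_apply_mem hy h)), hg z, intervalSwap_of_notMem hzx hzy]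

end Conjugation

theorem exists_involutive_isIET_translating {p q a x₁ y₁ x₂ y₂ : ℝ} (ha : 0 < a)
    (hpx₁ : p ≤ x₁) (hxy₁ : x₁ + a ≤ y₁) (hyq₁ : y₁ + a ≤ q)
    (hpx₂ : p ≤ x₂) (hxy₂ : x₂ + a ≤ y₂) (hyq₂ : y₂ + a ≤ q)
    (hd : Disjoint (Ico x₁ (x₁ + a) ∪ Ico y₁ (y₁ + a)) (Ico x₂ (x₂ + a) ∪ Ico y₂ (y₂ + a))) :
    ∃ g, IsIET p q g ∧ Involutive g ∧ EqOn g (· + (x₂ - x₁)) (Ico x₁ (x₁ + a)) ∧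
      EqOn g (· + (y₂ - y₁)) (Ico y₁ (y₁ + a)) := by
  simp only [disjoint_union_left, disjoint_union_right] at hd
  obtain ⟨⟨hX₁X₂, hY₁X₂⟩, hX₁Y₂, hY₁Y₂⟩ := hd
  have hX₁Y₁ := Ico_disjoint_Ico_of_add_le hxy₁
  have hX₂Y₂ := Ico_disjoint_Ico_of_add_le hxy₂
  set σ := intervalSwap a x₁ x₂
  set τ := intervalSwap a y₁ y₂
  have hσ : Involutive σ := intervalSwap_involutive hX₁X₂
  have hτ : Involutive τ := intervalSwap_involutive hY₁Y₂
  have hστ : Disjoint {z | σ z ≠ z} {z | τ z ≠ z} := by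
    rw [support_intervalSwap hX₁X₂, support_intervalSwap hY₁Y₂]
    exact disjoint_union_left.2
      ⟨disjoint_union_right.2 ⟨hX₁Y₁, hX₁Y₂⟩, disjoint_union_right.2 ⟨hY₁X₂.symm, hX₂Y₂⟩⟩
  have hout : ∀ z ∉ Ico p q, (σ ∘ τ) z = z := fun z hz => by
    simp only [σ, τ, comp_apply]
    rw [intervalSwap_eq_self_of_notMem (Ico_subset_Ico (by linarith) hyq₁)
      (Ico_subset_Ico (by linarith) hyq₂) hz, intervalSwap_eq_self_of_notMem
      (Ico_subset_Ico hpx₁ (by linarith)) (Ico_subset_Ico hpx₂ (by linarith)) hz]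
  have hg : Involutive (σ ∘ τ) := hσ.comp_of_disjoint hτ hστ
  have hpw : IsPiecewiseTranslation ({x₁, x₁ + a, x₂, x₂ + a} ∪ {y₁, y₁ + a, y₂, y₂ + a}) (σ ∘ τ) :=
    (isPiecewiseTranslation_intervalSwap a x₁ x₂).comp
      (isPiecewiseTranslation_intervalSwap a y₁ y₂) hτ hστ
  have hS : {p, q} ∪ ({x₁, x₁ + a, x₂, x₂ + a} ∪ {y₁, y₁ + a, y₂, y₂ + a}) ⊆ Icc p q := by
    simp only [union_subset_iff, insert_subset_iff, singleton_subset_iff, mem_Icc]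
    constructorm* _ ∧ _ <;> linarith
  refine ⟨σ ∘ τ, isIET_of_involutive hg hout (toFinite _) (by simp) (by simp) hS
    (hpw.mono subset_union_right), hg, fun z hz => ?_, fun z hz => ?_⟩
  · simp only [σ, τ, comp_apply]
    rw [intervalSwap_of_notMem (hX₁Y₁.notMem_of_mem_left hz)
      (hX₁Y₂.notMem_of_mem_left hz), intervalSwap_of_mem_left hz]
  · have hτz : z + (y₂ - y₁) ∈ Ico y₂ (y₂ + a) := add_sub_mem_Ico hz
    simp only [σ, τ, comp_apply]
    rw [intervalSwap_of_mem_left hz, intervalSwap_of_notMem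
      (hX₁Y₂.notMem_of_mem_right hτz) (hX₂Y₂.notMem_of_mem_right hτz)]

/-- Two interval swap maps of the same type with disjoint supports are
conjugate by an interval exchange transformation of order `2`. -/
theorem swaps_conjugate_by_involution (p q a : ℝ) (f₁ f₂ : ℝ → ℝ)
    (h₁ : IsIntervalSwap p q a f₁) (h₂ : IsIntervalSwap p q a f₂)
    (hdisj : Disjoint {x | f₁ x ≠ x} {x | f₂ x ≠ x}) :
    ∃ g : ℝ → ℝ, IsIET p q g ∧ g ∘ g = id ∧ g ≠ id ∧
      f₂ = g ∘ f₁ ∘ g := by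
  obtain ⟨ha, x₁, y₁, hpx₁, hxy₁, hyq₁, rfl⟩ := h₁.exists_eq_intervalSwap
  obtain ⟨-, x₂, y₂, hpx₂, hxy₂, hyq₂, rfl⟩ := h₂.exists_eq_intervalSwap
  have hd₁ := Ico_disjoint_Ico_of_add_le hxy₁
  have hd₂ := Ico_disjoint_Ico_of_add_le hxy₂
  rw [support_intervalSwap hd₁, support_intervalSwap hd₂] at hdisj
  obtain ⟨g, hIET, hg, hgx, hgy⟩ :=
    exists_involutive_isIET_translating ha hpx₁ hxy₁ hyq₁ hpx₂ hxy₂ hyq₂ hdisj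
  refine ⟨g, hIET, hg.comp_self, fun hid => ?_, (comp_intervalSwap_comp hg hd₁ hgx hgy).symm⟩
  have hx₁ : x₁ ∈ Ico x₁ (x₁ + a) := left_mem_Ico.2 (by linarith)
  have hx₂ : x₂ = x₁ := by simpa [hid] using (hgx hx₁).symm
  exact hdisj.notMem_of_mem_left (mem_union_left _ hx₁) (mem_union_left _ (hx₂ ▸ hx₁))
end

section
/- If f_1 and f_2 are restricted rotations of the same type (a,b) whose supports are disjoint, then f_1^{-1} f_2 is a product of three interval swap maps. -/
open scoped TensorProduct

/-- Explicit interval swap map exchanging `[x, x+a)` and `[y, y+a)`. -/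
noncomputable def swapFun (x y a : ℝ) (z : ℝ) : ℝ :=
  if x ≤ z ∧ z < x + a then z + (y - x)
  else if y ≤ z ∧ z < y + a then z - (y - x) else z

lemma sw_left {x y a z : ℝ} (h : x ≤ z) (h' : z < x + a) :
    swapFun x y a z = z + (y - x) := by
  simp only [swapFun]
  rw [if_pos ⟨h, h'⟩]

lemma sw_right {x y a z : ℝ} (hxy : x + a ≤ y) (h : y ≤ z) (h' : z < y + a) :
    swapFun x y a z = z - (y - x) := by
  have h1 : ¬(x ≤ z ∧ z < x + a) := fun hc => absurd hc.2 (not_lt.mpr (by linarith))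
  simp only [swapFun]
  rw [if_neg h1, if_pos ⟨h, h'⟩]

lemma sw_lt {x y a z : ℝ} (h : z < x) (hxy : x ≤ y) : swapFun x y a z = z := by
  have h1 : ¬(x ≤ z ∧ z < x + a) := fun hc => absurd hc.1 (not_le.mpr h)
  have h2 : ¬(y ≤ z ∧ z < y + a) := fun hc => absurd hc.1 (not_le.mpr (by linarith))
  simp only [swapFun]
  rw [if_neg h1, if_neg h2]

lemma sw_mid {x y a z : ℝ} (h : x + a ≤ z) (h' : z < y) : swapFun x y a z = z := by
  have h1 : ¬(x ≤ z ∧ z < x + a) := fun hc => absurd hc.2 (not_lt.mpr h)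
  have h2 : ¬(y ≤ z ∧ z < y + a) := fun hc => absurd hc.1 (not_le.mpr h')
  simp only [swapFun]
  rw [if_neg h1, if_neg h2]

lemma sw_ge {x y a z : ℝ} (ha : 0 ≤ a) (hxy : x + a ≤ y) (h : y + a ≤ z) :
    swapFun x y a z = z := by
  have h1 : ¬(x ≤ z ∧ z < x + a) := fun hc => absurd hc.2 (not_lt.mpr (by linarith))
  have h2 : ¬(y ≤ z ∧ z < y + a) := fun hc => absurd hc.2 (not_lt.mpr h)
  simp only [swapFun]
  rw [if_neg h1, if_neg h2]

lemma swapFun_isSwap {p q x y a : ℝ} (ha : 0 < a) (hx : p ≤ x) (hxy : x + a ≤ y)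
    (hy : y + a ≤ q) : IsIntervalSwap p q a (swapFun x y a) := by
  refine ⟨ha, x, y, hx, hxy, hy, ?_, ?_, ?_⟩
  · intro z hz
    rw [Set.mem_Ico] at hz
    exact sw_left hz.1 hz.2
  · intro z hz
    rw [Set.mem_Ico] at hz
    exact sw_right hxy hz.1 hz.2
  · intro z hz
    simp only [Set.mem_union, Set.mem_Ico, not_or, not_and, not_lt] at hz
    simp only [swapFun]
    split_ifs with h1 h2
    · exact absurd (hz.1 h1.1) (not_le.mpr h1.2)
    · exact absurd (hz.2 h2.1) (not_le.mpr h2.2)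
    · rfl

lemma swapFun_invol {x y a : ℝ} (hxy : x + a ≤ y) (ha : 0 < a) (z : ℝ) :
    swapFun x y a (swapFun x y a z) = z := by
  rcases lt_or_ge z x with h0 | h0
  · rw [sw_lt h0 (by linarith), sw_lt h0 (by linarith)]
  rcases lt_or_ge z (x + a) with h1 | h1
  · rw [sw_left h0 h1,
      sw_right (x := x) (y := y) (a := a) (z := z + (y - x)) hxy (by linarith) (by linarith)]
    ring
  rcases lt_or_ge z y with h2 | h2
  · rw [sw_mid h1 h2, sw_mid h1 h2]
  rcases lt_or_ge z (y + a) with h3 | h3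
  · rw [sw_right hxy h2 h3,
      sw_left (x := x) (y := y) (a := a) (z := z - (y - x)) (by linarith) (by linarith)]
    ring
  · rw [sw_ge ha.le hxy h3, sw_ge ha.le hxy h3]

/-- The key computation: if the support of `f₁` lies to the left of the
support of `f₂`, then `f₁ ∘ (g₁ ∘ g₂ ∘ g₃) = f₂` for three explicit swaps. -/
lemma key_comp {a b x₁ x₂ : ℝ} {f₁ f₂ : ℝ → ℝ}
    (ha : 0 < a) (hb : 0 < b) (hsep : x₁ + a + b ≤ x₂)
    (hA₁ : ∀ y ∈ Set.Ico x₁ (x₁ + a), f₁ y = y + b)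
    (hB₁ : ∀ y ∈ Set.Ico (x₁ + a) (x₁ + a + b), f₁ y = y - a)
    (hO₁ : ∀ y, y ∉ Set.Ico x₁ (x₁ + a + b) → f₁ y = y)
    (hA₂ : ∀ y ∈ Set.Ico x₂ (x₂ + a), f₂ y = y + b)
    (hB₂ : ∀ y ∈ Set.Ico (x₂ + a) (x₂ + a + b), f₂ y = y - a)
    (hO₂ : ∀ y, y ∉ Set.Ico x₂ (x₂ + a + b) → f₂ y = y) :
    f₁ ∘ (swapFun x₁ (x₂ + b) a ∘ swapFun (x₁ + a) x₂ b ∘ swapFun x₁ x₂ (a + b)) = f₂ := by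
  funext z
  simp only [Function.comp_apply]
  rcases lt_or_ge z x₁ with h0 | h0
  · -- z < x₁ : everything fixes z
    rw [sw_lt (x := x₁) (y := x₂) (a := a + b) (z := z) h0 (by linarith),
      sw_lt (x := x₁ + a) (y := x₂) (a := b) (z := z) (by linarith) (by linarith),
      sw_lt (x := x₁) (y := x₂ + b) (a := a) (z := z) h0 (by linarith),
      hO₁ z (fun hm => absurd hm.1 (not_le.mpr h0)),
      hO₂ z (fun hm => absurd hm.1 (not_le.mpr (by linarith)))]
  rcases lt_or_ge z (x₁ + a + b) with h1 | h1
  · -- z in the support of f₁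
    rcases lt_or_ge z (x₁ + b) with h2 | h2
    · rw [sw_left (x := x₁) (y := x₂) (a := a + b) (z := z) h0 (by linarith),
        sw_right (x := x₁ + a) (y := x₂) (a := b) (z := z + (x₂ - x₁))
          (by linarith) (by linarith) (by linarith),
        sw_mid (x := x₁) (y := x₂ + b) (a := a) (z := z + (x₂ - x₁) - (x₂ - (x₁ + a)))
          (by linarith) (by linarith),
        hB₁ (z + (x₂ - x₁) - (x₂ - (x₁ + a)))
          (Set.mem_Ico.mpr ⟨by linarith, by linarith⟩),
        hO₂ z (fun hm => absurd hm.1 (not_le.mpr (by linarith)))]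
      ring
    · rw [sw_left (x := x₁) (y := x₂) (a := a + b) (z := z) h0 (by linarith),
        sw_ge (x := x₁ + a) (y := x₂) (a := b) (z := z + (x₂ - x₁))
          hb.le (by linarith) (by linarith),
        sw_right (x := x₁) (y := x₂ + b) (a := a) (z := z + (x₂ - x₁))
          (by linarith) (by linarith) (by linarith),
        hA₁ (z + (x₂ - x₁) - (x₂ + b - x₁))
          (Set.mem_Ico.mpr ⟨by linarith, by linarith⟩),
        hO₂ z (fun hm => absurd hm.1 (not_le.mpr (by linarith)))]
      ring
  rcases lt_or_ge z x₂ with h2 | h2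
  · -- between the supports
    rw [sw_mid (x := x₁) (y := x₂) (a := a + b) (z := z) (by linarith) h2,
      sw_mid (x := x₁ + a) (y := x₂) (a := b) (z := z) (by linarith) h2,
      sw_mid (x := x₁) (y := x₂ + b) (a := a) (z := z) (by linarith) (by linarith),
      hO₁ z (fun hm => absurd hm.2 (not_lt.mpr h1)),
      hO₂ z (fun hm => absurd hm.1 (not_le.mpr h2))]
  rcases lt_or_ge z (x₂ + a + b) with h3 | h3
  · -- z in the support of f₂
    rcases lt_or_ge z (x₂ + a) with h4 | h4
    · rw [sw_right (x := x₁) (y := x₂) (a := a + b) (z := z) (by linarith) h2 (by linarith),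
        sw_lt (x := x₁ + a) (y := x₂) (a := b) (z := z - (x₂ - x₁)) (by linarith) (by linarith),
        sw_left (x := x₁) (y := x₂ + b) (a := a) (z := z - (x₂ - x₁)) (by linarith) (by linarith),
        hO₁ (z - (x₂ - x₁) + (x₂ + b - x₁))
          (fun hm => absurd hm.2 (not_lt.mpr (by linarith))),
        hA₂ z (Set.mem_Ico.mpr ⟨h2, h4⟩)]
      ring
    · rw [sw_right (x := x₁) (y := x₂) (a := a + b) (z := z) (by linarith) h2 (by linarith),
        sw_left (x := x₁ + a) (y := x₂) (a := b) (z := z - (x₂ - x₁)) (by linarith) (by linarith),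
        sw_mid (x := x₁) (y := x₂ + b) (a := a) (z := z - (x₂ - x₁) + (x₂ - (x₁ + a)))
          (by linarith) (by linarith),
        hO₁ (z - (x₂ - x₁) + (x₂ - (x₁ + a)))
          (fun hm => absurd hm.2 (not_lt.mpr (by linarith))),
        hB₂ z (Set.mem_Ico.mpr ⟨h4, h3⟩)]
      ring
  · -- to the right of both supports
    rw [sw_ge (x := x₁) (y := x₂) (a := a + b) (z := z) (by linarith) (by linarith) (by linarith),
      sw_ge (x := x₁ + a) (y := x₂) (a := b) (z := z) hb.le (by linarith) (by linarith),
      sw_ge (x := x₁) (y := x₂ + b) (a := a) (z := z) ha.le (by linarith) (by linarith),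
      hO₁ z (fun hm => absurd hm.2 (not_lt.mpr (by linarith))),
      hO₂ z (fun hm => absurd hm.2 (not_lt.mpr (by linarith)))]

/-- If `f₁` and `f₂` are restricted rotations of the same type `(a, b)` with
disjoint supports, then `f₁⁻¹ ∘ f₂` is a product of three interval swap maps. -/
theorem rotations_disjoint_supports (p q a b : ℝ) (f₁ f₂ : ℝ → ℝ)
    (h₁ : IsRestrictedRotation p q a b f₁) (h₂ : IsRestrictedRotation p q a b f₂)
    (hdisj : Disjoint {x | f₁ x ≠ x} {x | f₂ x ≠ x}) :
    ∃ g₁ g₂ g₃ : ℝ → ℝ,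
      (∃ c, IsIntervalSwap p q c g₁) ∧ (∃ c, IsIntervalSwap p q c g₂) ∧
      (∃ c, IsIntervalSwap p q c g₃) ∧
      f₁ ∘ (g₁ ∘ g₂ ∘ g₃) = f₂ := by
  obtain ⟨ha, hb, x₁, hp₁, hq₁, hA₁, hB₁, hO₁⟩ := h₁
  obtain ⟨-, -, x₂, hp₂, hq₂, hA₂, hB₂, hO₂⟩ := h₂
  -- the supports of the rotations are exactly the intervals `[xᵢ, xᵢ+a+b)`
  have hsub : ∀ (f : ℝ → ℝ) (x : ℝ), (∀ y ∈ Set.Ico x (x + a), f y = y + b) →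
      (∀ y ∈ Set.Ico (x + a) (x + a + b), f y = y - a) →
      Set.Ico x (x + a + b) ⊆ {z | f z ≠ z} := by
    intro f x hA hB z hz
    rw [Set.mem_Ico] at hz
    simp only [Set.mem_setOf_eq]
    rcases lt_or_ge z (x + a) with h | h
    · rw [hA z (Set.mem_Ico.mpr ⟨hz.1, h⟩)]; intro hc; linarith
    · rw [hB z (Set.mem_Ico.mpr ⟨h, hz.2⟩)]; intro hc; linarith
  have hd : Disjoint (Set.Ico x₁ (x₁ + a + b)) (Set.Ico x₂ (x₂ + a + b)) :=
    hdisj.mono (hsub f₁ x₁ hA₁ hB₁) (hsub f₂ x₂ hA₂ hB₂)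
  have horder : x₁ + a + b ≤ x₂ ∨ x₂ + a + b ≤ x₁ := by
    by_contra h
    push_neg at h
    exact Set.not_disjoint_iff.mpr ⟨max x₁ x₂,
      Set.mem_Ico.mpr ⟨le_max_left _ _, max_lt (by linarith) (by linarith [h.2])⟩,
      Set.mem_Ico.mpr ⟨le_max_right _ _, max_lt (by linarith [h.1]) (by linarith)⟩⟩ hd
  rcases horder with hsep | hsep
  · exact ⟨swapFun x₁ (x₂ + b) a, swapFun (x₁ + a) x₂ b, swapFun x₁ x₂ (a + b),
      ⟨a, swapFun_isSwap ha hp₁ (by linarith) (by linarith)⟩,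
      ⟨b, swapFun_isSwap hb (by linarith) (by linarith) (by linarith)⟩,
      ⟨a + b, swapFun_isSwap (by linarith) hp₁ (by linarith) (by linarith)⟩,
      key_comp ha hb hsep hA₁ hB₁ hO₁ hA₂ hB₂ hO₂⟩
  · have hk := key_comp ha hb hsep hA₂ hB₂ hO₂ hA₁ hB₁ hO₁
    refine ⟨swapFun x₂ x₁ (a + b), swapFun (x₂ + a) x₁ b, swapFun x₂ (x₁ + b) a,
      ⟨a + b, swapFun_isSwap (by linarith) hp₂ (by linarith) (by linarith)⟩,
      ⟨b, swapFun_isSwap hb (by linarith) (by linarith) (by linarith)⟩,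
      ⟨a, swapFun_isSwap ha hp₂ (by linarith) (by linarith)⟩, ?_⟩
    funext z
    have h3 := swapFun_invol (x := x₂) (y := x₁) (a := a + b) (by linarith) (by linarith)
    have h2 := swapFun_invol (x := x₂ + a) (y := x₁) (a := b) (by linarith) hb
    have h1 := swapFun_invol (x := x₂) (y := x₁ + b) (a := a) (by linarith) ha
    have := congrFun hk
      (swapFun x₂ x₁ (a + b) (swapFun (x₂ + a) x₁ b (swapFun x₂ (x₁ + b) a z)))
    simp only [Function.comp_apply, h1, h2, h3] at this ⊢
    exact this.symm
end

section
/- If f is a restricted rotation of type (a,b) with a > b, then there exist interval swap maps g_1 and g_2 such that g_1 f = f g_2 and this common product is a restricted rotation of type (a−b, b). -/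
open scoped TensorProduct

/-- If `f` is a restricted rotation of type `(a, b)` with `a > b`, then there
are interval swap maps `g₁, g₂` with `g₁ ∘ f = f ∘ g₂` a restricted rotation
of type `(a - b, b)`. -/
theorem rotation_reduction (p q a b : ℝ) (hab : b < a) (f : ℝ → ℝ)
    (hf : IsRestrictedRotation p q a b f) :
    ∃ g₁ g₂ : ℝ → ℝ,
      (∃ c, IsIntervalSwap p q c g₁) ∧ (∃ c, IsIntervalSwap p q c g₂) ∧
      g₁ ∘ f = f ∘ g₂ ∧
      IsRestrictedRotation p q (a - b) b (g₁ ∘ f) := by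
  obtain ⟨ha, hb, x, hpx, hxq, hf1, hf2, hf3⟩ := hf
  classical
  set g₁ : ℝ → ℝ := fun z => if x ≤ z ∧ z < x + b then z + a
    else if x + a ≤ z ∧ z < x + a + b then z - a else z with hg₁def
  set g₂ : ℝ → ℝ := fun z => if x + a - b ≤ z ∧ z < x + a then z + b
    else if x + a ≤ z ∧ z < x + a + b then z - b else z with hg₂def
  set h : ℝ → ℝ := fun z => if x ≤ z ∧ z < x + (a - b) then z + b
    else if x + (a - b) ≤ z ∧ z < x + a then z - (a - b) else z with hhdef
  have key1 : ∀ z, g₁ (f z) = h z := by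
    intro z
    rcases lt_or_ge z x with hz1 | hz1
    · have hfz : f z = z := hf3 z (by simp [Set.mem_Ico]; intro h'; linarith)
      rw [hfz]
      simp only [hg₁def, hhdef]
      rw [if_neg (by rintro ⟨u, v⟩; linarith), if_neg (by rintro ⟨u, v⟩; linarith),
        if_neg (by rintro ⟨u, v⟩; linarith), if_neg (by rintro ⟨u, v⟩; linarith)]
    · rcases lt_or_ge z (x + (a - b)) with hz2 | hz2
      · have hfz : f z = z + b := hf1 z ⟨hz1, by linarith⟩
        rw [hfz]
        simp only [hg₁def, hhdef]
        rw [if_neg (by rintro ⟨u, v⟩; linarith), if_neg (by rintro ⟨u, v⟩; linarith),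
          if_pos ⟨hz1, hz2⟩]
      · rcases lt_or_ge z (x + a) with hz3 | hz3
        · have hfz : f z = z + b := hf1 z ⟨by linarith, by linarith⟩
          rw [hfz]
          simp only [hg₁def, hhdef]
          rw [if_neg (by rintro ⟨u, v⟩; linarith), if_pos ⟨by linarith, by linarith⟩,
            if_neg (by rintro ⟨u, v⟩; linarith), if_pos ⟨hz2, hz3⟩]
          ring
        · rcases lt_or_ge z (x + a + b) with hz4 | hz4
          · have hfz : f z = z - a := hf2 z ⟨hz3, by linarith⟩
            rw [hfz]
            simp only [hg₁def, hhdef]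
            rw [if_pos ⟨by linarith, by linarith⟩, if_neg (by rintro ⟨u, v⟩; linarith),
              if_neg (by rintro ⟨u, v⟩; linarith)]
            ring
          · have hfz : f z = z := hf3 z (by simp [Set.mem_Ico]; intro h'; linarith)
            rw [hfz]
            simp only [hg₁def, hhdef]
            rw [if_neg (by rintro ⟨u, v⟩; linarith), if_neg (by rintro ⟨u, v⟩; linarith),
              if_neg (by rintro ⟨u, v⟩; linarith), if_neg (by rintro ⟨u, v⟩; linarith)]
  have key2 : ∀ z, f (g₂ z) = h z := by
    intro z
    rcases lt_or_ge z x with hz1 | hz1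
    · have hgz : g₂ z = z := by
        simp only [hg₂def]
        rw [if_neg (by rintro ⟨u, v⟩; linarith), if_neg (by rintro ⟨u, v⟩; linarith)]
      rw [hgz, hf3 z (by simp [Set.mem_Ico]; intro h'; linarith)]
      simp only [hhdef]
      rw [if_neg (by rintro ⟨u, v⟩; linarith), if_neg (by rintro ⟨u, v⟩; linarith)]
    · rcases lt_or_ge z (x + (a - b)) with hz2 | hz2
      · have hgz : g₂ z = z := by
          simp only [hg₂def]
          rw [if_neg (by rintro ⟨u, v⟩; linarith), if_neg (by rintro ⟨u, v⟩; linarith)]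
        rw [hgz, hf1 z ⟨hz1, by linarith⟩]
        simp only [hhdef]
        rw [if_pos ⟨hz1, hz2⟩]
      · rcases lt_or_ge z (x + a) with hz3 | hz3
        · have hgz : g₂ z = z + b := by
            simp only [hg₂def]
            rw [if_pos ⟨by linarith, hz3⟩]
          rw [hgz, hf2 (z + b) ⟨by linarith, by linarith⟩]
          simp only [hhdef]
          rw [if_neg (by rintro ⟨u, v⟩; linarith), if_pos ⟨hz2, hz3⟩]
          ring
        · rcases lt_or_ge z (x + a + b) with hz4 | hz4
          · have hgz : g₂ z = z - b := by
              simp only [hg₂def]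
              rw [if_neg (by rintro ⟨u, v⟩; linarith), if_pos ⟨hz3, hz4⟩]
            rw [hgz, hf1 (z - b) ⟨by linarith, by linarith⟩]
            simp only [hhdef]
            rw [if_neg (by rintro ⟨u, v⟩; linarith), if_neg (by rintro ⟨u, v⟩; linarith)]
            ring
          · have hgz : g₂ z = z := by
              simp only [hg₂def]
              rw [if_neg (by rintro ⟨u, v⟩; linarith), if_neg (by rintro ⟨u, v⟩; linarith)]
            rw [hgz, hf3 z (by simp [Set.mem_Ico]; intro h'; linarith)]
            simp only [hhdef]
            rw [if_neg (by rintro ⟨u, v⟩; linarith), if_neg (by rintro ⟨u, v⟩; linarith)]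
  refine ⟨g₁, g₂, ⟨b, hb, x, x + a, hpx, by linarith, by linarith, ?_, ?_, ?_⟩,
    ⟨b, hb, x + a - b, x + a, by linarith, by linarith, by linarith, ?_, ?_, ?_⟩,
    ?_, ?_⟩
  · intro z hz
    simp only [Set.mem_Ico] at hz
    simp only [hg₁def]
    rw [if_pos ⟨hz.1, hz.2⟩]
    ring
  · intro z hz
    simp only [Set.mem_Ico] at hz
    simp only [hg₁def]
    rw [if_neg (by rintro ⟨u, v⟩; linarith [hz.1]), if_pos ⟨hz.1, by linarith [hz.2]⟩]
    ring
  · intro z hz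
    simp only [Set.mem_union, Set.mem_Ico, not_or, not_and, not_lt, not_le] at hz
    simp only [hg₁def]
    rw [if_neg (by rintro ⟨u, v⟩; exact absurd (hz.1 u) (not_le.mpr v)),
      if_neg (by rintro ⟨u, v⟩; have := hz.2 u; linarith)]
  · intro z hz
    simp only [Set.mem_Ico] at hz
    simp only [hg₂def]
    rw [if_pos ⟨hz.1, by linarith [hz.2]⟩]
    ring
  · intro z hz
    simp only [Set.mem_Ico] at hz
    simp only [hg₂def]
    rw [if_neg (by rintro ⟨u, v⟩; linarith [hz.1]), if_pos ⟨hz.1, by linarith [hz.2]⟩]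
    ring
  · intro z hz
    simp only [Set.mem_union, Set.mem_Ico, not_or, not_and, not_lt, not_le] at hz
    simp only [hg₂def]
    rw [if_neg (by rintro ⟨u, v⟩; have := hz.1 u; linarith),
      if_neg (by rintro ⟨u, v⟩; have := hz.2 u; linarith)]
  · funext z
    simp only [Function.comp_apply]
    rw [key1 z, key2 z]
  · refine ⟨by linarith, hb, x, hpx, by linarith, ?_, ?_, ?_⟩
    · intro y hy
      simp only [Set.mem_Ico] at hy
      simp only [Function.comp_apply]
      rw [key1 y]
      simp only [hhdef]
      rw [if_pos ⟨hy.1, hy.2⟩]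
    · intro y hy
      simp only [Set.mem_Ico] at hy
      simp only [Function.comp_apply]
      rw [key1 y]
      simp only [hhdef]
      rw [if_neg (by rintro ⟨u, v⟩; linarith [hy.1]), if_pos ⟨hy.1, by linarith [hy.2]⟩]
    · intro y hy
      simp only [Set.mem_Ico, not_and, not_lt, not_le] at hy
      simp only [Function.comp_apply]
      rw [key1 y]
      simp only [hhdef]
      by_cases hxy : x ≤ y
      · have := hy hxy
        rw [if_neg (by rintro ⟨u, v⟩; linarith), if_neg (by rintro ⟨u, v⟩; linarith)]
      · rw [if_neg (by rintro ⟨u, v⟩; exact hxy u), if_neg (by rintro ⟨u, v⟩; linarith [not_le.mp hxy])]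
end

section
/- The SAF invariant of an interval exchange transformation f of I = [p,q) is well defined: if I = I_1 ∪ ... ∪ I_k and I = I'_1 ∪ ... ∪ I'_m are two partitions of I into half-open intervals on which f acts by translations t_i respectively t'_j, and λ_i, λ'_j denote the lengths, then Σ_i λ_i ⊗ t_i = Σ_j λ'_j ⊗ t'_j in ℝ ⊗_ℚ ℝ. -/
/-!
Pairing the second tensor factor with a `ℚ`-linear functional `φ : ℝ → ℚ` sends
`Σ λᵢ ⊗ tᵢ` to `Σ λᵢ φ(tᵢ)`, which is the integral over `[p, q)` of the step function
`x ↦ φ (f x - x)`; this number does not depend on the partition. Since `ℝ` is free over `ℚ`,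
these pairings separate the points of `ℝ ⊗[ℚ] ℝ`.
-/

open scoped TensorProduct

open MeasureTheory

theorem TensorProduct.ext_of_forall_lTensor_dual {R M N : Type*} [CommSemiring R]
    [AddCommMonoid M] [Module R M] [AddCommMonoid N] [Module R N] [Module.Free R N]
    {ξ ξ' : M ⊗[R] N} (h : ∀ φ : Module.Dual R N, φ.lTensor M ξ = φ.lTensor M ξ') :
    ξ = ξ' := by
  let b := Module.Free.chooseBasis R N
  let e := (b.repr.lTensor M).trans (finsuppScalarRight R R M _)
  have he (ζ : M ⊗[R] N) (i) :
      e ζ i = AlgebraTensorModule.rid R R M ((b.coord i).lTensor M ζ) := by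
    rw [LinearEquiv.trans_apply, finsuppScalarRight_apply, Module.Basis.coord,
      LinearMap.lTensor_comp_apply]
    rfl
  exact e.injective (Finsupp.ext fun i => by rw [he, he, h])

section StepFunction

variable {E : Type*} [NormedAddCommGroup E] {F : ℝ → E} {a b : ℝ} {c : E}

theorem intervalIntegrable_of_eq_const_on_Ico (hab : a ≤ b) (hF : ∀ x ∈ Set.Ico a b, F x = c) :
    IntervalIntegrable F volume a b :=
  (intervalIntegrable_iff_integrableOn_Ico_of_le hab).2 <|
    (integrableOn_const (by simp)).congr_fun (fun x hx => (hF x hx).symm) measurableSet_Ico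

variable [NormedSpace ℝ E] [CompleteSpace E]

theorem integral_eq_of_eq_const_on_Ico (hab : a ≤ b) (hF : ∀ x ∈ Set.Ico a b, F x = c) :
    ∫ x in a..b, F x = (b - a) • c := by
  rw [intervalIntegral.integral_of_le hab, ← integral_Ico_eq_integral_Ioc,
    setIntegral_congr_fun measurableSet_Ico hF, setIntegral_const, Real.volume_real_Ico_of_le hab]

open Fin.NatCast in
theorem integral_eq_sum_of_eq_const_on_Ico {n : ℕ} {pt : Fin (n + 1) → ℝ} {c : Fin n → E}
    (hpt : Monotone pt)
    (hF : ∀ i : Fin n, ∀ x ∈ Set.Ico (pt i.castSucc) (pt i.succ), F x = c i) :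
    ∫ x in pt 0..pt (Fin.last n), F x = ∑ i : Fin n, (pt i.succ - pt i.castSucc) • c i := by
  have hcast (i : Fin n) :
      ((i : ℕ) : Fin (n + 1)) = i.castSucc ∧ (((i : ℕ) + 1 : ℕ) : Fin (n + 1)) = i.succ := by
    rw [Nat.cast_add_one, Fin.coe_eq_castSucc, Fin.coeSucc_eq_succ]
    exact ⟨rfl, rfl⟩
  have hle (i : Fin n) : pt i.castSucc ≤ pt i.succ := hpt (Fin.castSucc_le_succ i)
  have hsum := intervalIntegral.sum_integral_adjacent_intervals (a := fun k => pt k) (f := F)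
    (μ := volume) (n := n) fun k hk => by
      simpa only [hcast ⟨k, hk⟩] using
        intervalIntegrable_of_eq_const_on_Ico (hle ⟨k, hk⟩) (hF ⟨k, hk⟩)
  rw [← Fin.sum_univ_eq_sum_range (fun k => ∫ x in pt k..pt (k + 1 : ℕ), F x), Nat.cast_zero,
    Fin.natCast_eq_last] at hsum
  rw [← hsum]
  refine Finset.sum_congr rfl fun i _ => ?_
  rw [(hcast i).1, (hcast i).2]
  exact integral_eq_of_eq_const_on_Ico (hle i) (hF i)

end StepFunction

theorem HasSAF.rid_lTensor_eq_integral {p q : ℝ} {f : ℝ → ℝ} {ξ : ℝ ⊗[ℚ] ℝ}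
    (h : HasSAF p q f ξ) (φ : Module.Dual ℚ ℝ) :
    TensorProduct.rid ℚ ℝ (φ.lTensor ℝ ξ) = ∫ x in p..q, (φ (f x - x) : ℝ) := by
  obtain ⟨n, pt, t, hpt, rfl, rfl, htr, rfl⟩ := h
  rw [integral_eq_sum_of_eq_const_on_Ico (c := fun i => (φ (t i) : ℝ)) hpt.monotone
    fun i x hx => by rw [htr i x hx, add_sub_cancel_left]]
  simp [Rat.smul_def, mul_comm]

theorem saf_well_defined_general (p q : ℝ) (f : ℝ → ℝ)
    (ξ ξ' : ℝ ⊗[ℚ] ℝ) (h : HasSAF p q f ξ) (h' : HasSAF p q f ξ') :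
    ξ = ξ' :=
  TensorProduct.ext_of_forall_lTensor_dual fun φ => (TensorProduct.rid ℚ ℝ).injective <| by
    rw [h.rid_lTensor_eq_integral, h'.rid_lTensor_eq_integral]

/-- The SAF invariant of an interval exchange transformation is well defined:
any two partitions of `[p, q)` on which `f` acts by translations give the same
sum `Σ λᵢ ⊗ tᵢ` in `ℝ ⊗[ℚ] ℝ`. -/
theorem saf_well_defined (p q : ℝ) (f : ℝ → ℝ) (hf : IsIET p q f)
    (ξ ξ' : ℝ ⊗[ℚ] ℝ) (h : HasSAF p q f ξ) (h' : HasSAF p q f ξ') :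
    ξ = ξ' :=
  saf_well_defined_general p q f ξ ξ' h h'
end

section
/- An element ξ ∈ ℝ ⊗_ℚ ℝ equals SAF(f) for some interval exchange transformation f of I = [p,q) if and only if ξ lies in ℝ ∧_ℚ ℝ, the subspace of ℝ ⊗_ℚ ℝ spanned by all elements a ⊗ b − b ⊗ a. -/
open scoped TensorProduct

/-!
For `g x = x ⊗ x`, the symmetrization `λ ⊗ t + t ⊗ λ` of a term of the SAF sum is the increment of
`g` across the translated piece minus its increment across the piece. The pieces and, as `f` is a
bijection of `[p, q)`, their images both tile `[p, q)`, so both sums telescope to `g q - g p`: the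
SAF invariant is antisymmetric under the flip of `ℝ ⊗ ℝ`, hence lies in `ℝ ∧ ℝ` since `2` is
invertible in `ℚ`.

Conversely, `a ∧ b = (a / N) ∧ (N b)`, and reducing `N b` modulo `ℓ = a / N` gives
`a ∧ b = ℓ ∧ s = (ℓ - s) ∧ s` with `0 ≤ s < ℓ` and `ℓ` as small as we like. For `s > 0` this is
the SAF invariant of the restricted rotation of type `(ℓ - s, s)`, and rotations placed side by side
in `[p, q)` realize any finite sum of wedges.
-/

open Set Function TensorProduct

section Tiling

variable {α ι M : Type*} [LinearOrder α] [AddCommGroup M]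

theorem sum_sub_eq_of_biUnion_Ico_eq (g : α → M) {s : Finset ι} {v e : ι → α} {p q : α}
    (hpq : p ≤ q) (hve : ∀ i ∈ s, v i < e i)
    (hdisj : (s : Set ι).PairwiseDisjoint fun i => Ico (v i) (e i))
    (hcover : ⋃ i ∈ s, Ico (v i) (e i) = Ico p q) :
    ∑ i ∈ s, (g (e i) - g (v i)) = g q - g p := by
  classical
  induction s using Finset.strongInduction generalizing p with
  | H s ih =>
    have hsub : ∀ i ∈ s, Ico (v i) (e i) ⊆ Ico p q := fun i hi => by
      rw [← hcover]; exact Finset.subset_set_biUnion_of_mem (f := fun i => Ico (v i) (e i)) hi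
    rcases hpq.eq_or_lt with rfl | hpq
    · have : s = ∅ := Finset.eq_empty_of_forall_notMem fun i hi => by
        simpa using hsub i hi (left_mem_Ico.2 (hve i hi))
      simp [this]
    -- the piece containing `p` starts at `p`; the others tile what is left
    obtain ⟨i, hi, hpi⟩ := mem_iUnion₂.1 (hcover.symm ▸ left_mem_Ico.2 hpq :
      p ∈ ⋃ i ∈ s, Ico (v i) (e i))
    obtain ⟨hpv, hei⟩ := (Ico_subset_Ico_iff (hve i hi)).1 (hsub i hi)
    have hvp : v i = p := le_antisymm hpi.1 hpv
    have hrest : ⋃ j ∈ s.erase i, Ico (v j) (e j) = Ico (e i) q := by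
      have hsplit : Ico p (e i) ∪ ⋃ j ∈ s.erase i, Ico (v j) (e j) = Ico p (e i) ∪ Ico (e i) q := by
        rw [Ico_union_Ico_eq_Ico hpi.2.le hei, ← hcover]
        conv_rhs => rw [← Finset.insert_erase hi, Finset.set_biUnion_insert, hvp]
      have hdisj_i : Disjoint (Ico p (e i)) (⋃ j ∈ s.erase i, Ico (v j) (e j)) := by
        rw [← hvp]
        exact disjoint_iUnion₂_right.2 fun j hj =>
          hdisj hi (Finset.mem_of_mem_erase hj) (Finset.ne_of_mem_erase hj).symm
      calc ⋃ j ∈ s.erase i, Ico (v j) (e j)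
          = (Ico p (e i) ∪ ⋃ j ∈ s.erase i, Ico (v j) (e j)) \ Ico p (e i) :=
            hdisj_i.sup_sdiff_cancel_left.symm
        _ = Ico (e i) q := by rw [hsplit]; exact Ico_disjoint_Ico_same.sup_sdiff_cancel_left
    rw [← Finset.add_sum_erase s _ hi, ih _ (Finset.erase_ssubset hi) hei
      (fun j hj => hve j (Finset.mem_of_mem_erase hj)) (hdisj.subset (by simp)) hrest, hvp]
    abel

theorem Monotone.pairwise_disjoint_on_Ico_castSucc_succ {n : ℕ} {pt : Fin (n + 1) → α}
    (hpt : Monotone pt) : Pairwise (Disjoint on fun i : Fin n => Ico (pt i.castSucc) (pt i.succ)) :=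
  (pairwise_disjoint_on _).2 fun _ _ hij =>
    disjoint_iff_inf_le.mpr fun _ ⟨⟨_, h₁⟩, ⟨h₂, _⟩⟩ =>
      h₁.not_ge <| (hpt <| Fin.succ_le_castSucc_iff.2 hij).trans h₂

theorem Monotone.iUnion_Ico_castSucc_succ {n : ℕ} {pt : Fin (n + 1) → α} (hpt : Monotone pt) :
    ⋃ i : Fin n, Ico (pt i.castSucc) (pt i.succ) = Ico (pt 0) (pt (Fin.last n)) := by
  induction n with
  | zero => simp
  | succ n ih =>
    rw [iUnion_fin_add_one_eq_iUnion_castSucc]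
    have := ih (hpt.comp Fin.strictMono_castSucc.monotone)
    simp only [comp_apply, Fin.castSucc_zero] at this
    simp only [comp_def, Fin.succ_castSucc, this]
    exact Ico_union_Ico_eq_Ico (hpt (Fin.zero_le _)) (hpt (Fin.castSucc_le_succ _))

end Tiling

section Partition

variable {α M : Type*} [AddCommGroup α] [LinearOrder α] [IsOrderedAddMonoid α] [AddCommGroup M]

theorem sum_sub_eq_of_bijOn_of_translate (g : α → M) {n : ℕ} {pt : Fin (n + 1) → α}
    {t : Fin n → α} {f : α → α} (hpt : StrictMono pt)
    (hf : BijOn f (Ico (pt 0) (pt (Fin.last n))) (Ico (pt 0) (pt (Fin.last n))))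
    (ht : ∀ i, ∀ x ∈ Ico (pt i.castSucc) (pt i.succ), f x = x + t i) :
    ∑ i, (g (pt i.succ + t i) - g (pt i.castSucc + t i)) = g (pt (Fin.last n)) - g (pt 0) := by
  have hcover := hpt.monotone.iUnion_Ico_castSucc_succ
  have himage : ∀ i, f '' Ico (pt i.castSucc) (pt i.succ) =
      Ico (pt i.castSucc + t i) (pt i.succ + t i) := fun i =>
    (EqOn.image_eq (ht i)).trans (image_add_const_Ico _ _ _)
  have hsub : ∀ i : Fin n, Ico (pt i.castSucc) (pt i.succ) ⊆ Ico (pt 0) (pt (Fin.last n)) :=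
    fun i => (subset_iUnion (fun i : Fin n => Ico (pt i.castSucc) (pt i.succ)) i).trans
      hcover.subset
  have hdisj : Pairwise (Disjoint on fun i => Ico (pt i.castSucc + t i) (pt i.succ + t i)) :=
    fun i j hij => by
      simpa only [onFun, ← himage] using
        (hpt.monotone.pairwise_disjoint_on_Ico_castSucc_succ hij).image hf.injOn (hsub i) (hsub j)
  have hcover' : ⋃ i, Ico (pt i.castSucc + t i) (pt i.succ + t i) =
      Ico (pt 0) (pt (Fin.last n)) := by
    simp_rw [← himage, ← image_iUnion, hcover, hf.image_eq]
  exact sum_sub_eq_of_biUnion_Ico_eq g (hpt.monotone (Fin.zero_le _))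
    (v := fun i => pt i.castSucc + t i) (e := fun i => pt i.succ + t i)
    (fun i _ => by simpa using hpt i.castSucc_lt_succ) (hdisj.set_pairwise _)
    (by simpa using hcover')

end Partition

theorem HasSAF.add_comm_eq_zero {p q : ℝ} {f : ℝ → ℝ} {ξ : ℝ ⊗[ℚ] ℝ}
    (hf : BijOn f (Ico p q) (Ico p q)) (h : HasSAF p q f ξ) :
    ξ + TensorProduct.comm ℚ ℝ ℝ ξ = 0 := by
  obtain ⟨n, pt, t, hpt, rfl, rfl, ht, rfl⟩ := h
  let g : ℝ → ℝ ⊗[ℚ] ℝ := fun x => x ⊗ₜ x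
  have himg := sum_sub_eq_of_bijOn_of_translate g hpt hf ht
  have hdom := sum_sub_eq_of_bijOn_of_translate g hpt (bijOn_id _) (t := 0)
    fun _ x _ => (add_zero x).symm
  simp only [Pi.zero_apply, add_zero] at hdom
  have hsymm : ∀ a b t : ℝ, (b - a) ⊗ₜ[ℚ] t + t ⊗ₜ[ℚ] (b - a) =
      (g (b + t) - g (a + t)) - (g b - g a) := fun a b t => by
    simp only [g, add_tmul, tmul_add, sub_tmul, tmul_sub]
    abel
  simp only [map_sum, comm_tmul, ← Finset.sum_add_distrib, hsymm, Finset.sum_sub_distrib, hdom,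
    himg, sub_self]

theorem TensorProduct.mem_span_of_add_comm_eq_zero {R M : Type*} [CommRing R] [Invertible (2 : R)]
    [AddCommGroup M] [Module R M] {ξ : M ⊗[R] M} (h : ξ + TensorProduct.comm R M M ξ = 0) :
    ξ ∈ Submodule.span R {z : M ⊗[R] M | ∃ a b : M, z = a ⊗ₜ[R] b - b ⊗ₜ[R] a} := by
  have hsub : ∀ η : M ⊗[R] M, η - TensorProduct.comm R M M η ∈
      Submodule.span R {z : M ⊗[R] M | ∃ a b : M, z = a ⊗ₜ[R] b - b ⊗ₜ[R] a} := fun η => by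
    induction η using TensorProduct.induction_on with
    | zero => simp
    | tmul a b => exact Submodule.subset_span ⟨a, b, by simp⟩
    | add x y hx hy => simpa [add_sub_add_comm] using add_mem hx hy
  have hξ : ξ - TensorProduct.comm R M M ξ = (2 : R) • ξ := by
    rw [eq_neg_of_add_eq_zero_right h, sub_neg_eq_add, two_smul]
  simpa [hξ] using Submodule.smul_mem _ (⅟2 : R) (hsub ξ)

noncomputable def wedge (a b : ℝ) : ℝ ⊗[ℚ] ℝ := a ⊗ₜ[ℚ] b - b ⊗ₜ[ℚ] a

section Wedge

variable (a b : ℝ)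

theorem wedge_zero_right : wedge a 0 = 0 := by simp [wedge]

theorem wedge_neg_neg : wedge (-a) (-b) = wedge a b := by
  simp only [wedge, neg_tmul, tmul_neg, neg_neg]

theorem smul_wedge (c : ℚ) : c • wedge a b = wedge (c • a) b := by
  rw [wedge, wedge, smul_sub, smul_tmul', smul_tmul', smul_tmul c b a]

theorem wedge_smul_left (c : ℚ) : wedge (c • a) b = wedge a (c • b) := by
  simp [wedge, smul_tmul]

theorem wedge_add_zsmul_right (k : ℤ) : wedge a (b + k • a) = wedge a b := by
  rw [wedge, wedge, tmul_add, add_tmul, tmul_smul, ← smul_tmul']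
  abel

theorem wedge_sub_right : wedge (a - b) b = wedge a b := by
  simp [wedge, tmul_sub, sub_tmul]

end Wedge

theorem exists_wedge_eq_of_pos {a : ℝ} (ha : 0 < a) (b : ℝ) {ε : ℝ} (hε : 0 < ε) :
    ∃ ℓ s, 0 < ℓ ∧ ℓ < ε ∧ s ∈ Ico 0 ℓ ∧ wedge a b = wedge ℓ s := by
  obtain ⟨N, hN⟩ := exists_nat_gt (a / ε)
  have hN0 : (0 : ℝ) < N := (div_pos ha hε).trans hN
  have hℓ : 0 < a / N := div_pos ha hN0
  refine ⟨a / N, toIcoMod hℓ 0 (N * b), hℓ, (div_lt_iff₀ hN0).2 ((div_lt_iff₀ hε).1 hN |>.trans_eq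
    (mul_comm _ _)), by simpa using toIcoMod_mem_Ico hℓ 0 (N * b), ?_⟩
  have haN : a = (N : ℚ) • (a / N) := by rw [Rat.smul_def]; push_cast; field_simp
  have hbN : (N : ℚ) • b = toIcoMod hℓ 0 (N * b) + toIcoDiv hℓ 0 (N * b) • (a / N) := by
    rw [toIcoMod_add_toIcoDiv_zsmul, Rat.smul_def]; push_cast; rfl
  conv_lhs => rw [haN, wedge_smul_left, hbN, wedge_add_zsmul_right]

theorem wedge_eq_zero_or_exists_pos (a b : ℝ) {ε : ℝ} (hε : 0 < ε) :
    wedge a b = 0 ∨ ∃ a' b', 0 < a' ∧ 0 < b' ∧ a' + b' < ε ∧ wedge a b = wedge a' b' := by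
  obtain ⟨ℓ, s, hℓ, hℓε, ⟨hs, hsℓ⟩, hab⟩ : ∃ ℓ s, 0 < ℓ ∧ ℓ < ε ∧ s ∈ Ico 0 ℓ ∧
      wedge a b = wedge ℓ s := by
    rcases lt_trichotomy a 0 with ha | rfl | ha
    · simpa only [wedge_neg_neg] using exists_wedge_eq_of_pos (neg_pos.2 ha) (-b) hε
    · exact ⟨ε / 2, 0, half_pos hε, half_lt_self hε, left_mem_Ico.2 (half_pos hε),
        by simp [wedge]⟩
    · exact exists_wedge_eq_of_pos ha b hε
  rcases hs.eq_or_lt with rfl | hs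
  · exact .inl (hab.trans (wedge_zero_right ℓ))
  · exact .inr ⟨ℓ - s, s, sub_pos.2 hsℓ, hs, by linarith, by rw [hab, wedge_sub_right]⟩

namespace HasSAF

variable {p q r t : ℝ} {f g : ℝ → ℝ} {ξ : ℝ ⊗[ℚ] ℝ}

theorem nil (p : ℝ) (f : ℝ → ℝ) : HasSAF p p f 0 :=
  ⟨0, fun _ => p, Fin.elim0, Fin.strictMono_iff_lt_succ.2 fun i => i.elim0, rfl, rfl,
    fun i => i.elim0, by simp⟩

theorem cons (hpr : p < r) (hf : ∀ x ∈ Ico p r, f x = x + t) (h : HasSAF r q f ξ) :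
    HasSAF p q f ((r - p) ⊗ₜ[ℚ] t + ξ) := by
  obtain ⟨n, pt, ts, hpt, rfl, rfl, hts, rfl⟩ := h
  refine ⟨n + 1, Fin.cons p pt, Fin.cons t ts, ?_, rfl, rfl, fun i => ?_, ?_⟩
  · exact (Fin.strictMono_iff_lt_succ.2 fun i => hpt i.castSucc_lt_succ).vecCons hpr
  · cases i using Fin.cases with
    | zero => simpa using hf
    | succ i => simpa [← Fin.succ_castSucc] using hts i
  · simp [Fin.sum_univ_succ]

theorem congr (h : HasSAF p q f ξ) (hfg : EqOn f g (Ico p q)) : HasSAF p q g ξ := by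
  obtain ⟨n, pt, t, hpt, rfl, rfl, ht, rfl⟩ := h
  refine ⟨n, pt, t, hpt, rfl, rfl, fun i x hx => ?_, rfl⟩
  rw [← hfg (hpt.monotone.iUnion_Ico_castSucc_succ ▸ mem_iUnion_of_mem i hx), ht i x hx]

theorem wedge_add {u a b : ℝ} (ha : 0 < a) (hb : 0 < b) (h₁ : ∀ y ∈ Ico u (u + a), f y = y + b)
    (h₂ : ∀ y ∈ Ico (u + a) (u + a + b), f y = y - a) (h : HasSAF (u + a + b) q f ξ) :
    HasSAF u q f (wedge a b + ξ) := by
  convert (h.cons (by linarith) (t := -a) fun y hy => (h₂ y hy).trans (sub_eq_add_neg _ _)).cons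
    (by linarith) h₁ using 1
  simp only [wedge, add_sub_cancel_left, tmul_neg]
  abel

end HasSAF

theorem Equiv.Perm.bijOn_of_forall_notMem {α : Type*} {σ : Equiv.Perm α} {s : Set α}
    (h : ∀ x ∉ s, σ x = x) : BijOn σ s s := by
  refine σ.bijOn fun x => ⟨fun hσx => ?_, fun hx => ?_⟩
  · by_contra hx
    exact hx (h x hx ▸ hσx)
  · by_contra hσx
    rw [σ.injective (h _ hσx)] at hσx
    exact hσx hx

theorem exists_perm_isRestrictedRotation (u : ℝ) {a b : ℝ} (ha : 0 < a) (hb : 0 < b) :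
    ∃ ρ : Equiv.Perm ℝ, IsRestrictedRotation u (u + a + b) a b ρ := by
  classical
  have : Fact (0 < a + b) := ⟨add_pos ha hb⟩
  set e := AddCircle.equivIco (a + b) u
  set ρ := Equiv.Perm.ofSubtype (e.permCongr (Equiv.addRight (b : AddCircle (a + b))))
  have hρ : ∀ y ∈ Ico u (u + (a + b)), ∀ z ∈ Ico u (u + (a + b)),
      ((y + b : ℝ) : AddCircle (a + b)) = z → ρ y = z := by
    intro y hy z hz hyz
    rw [Equiv.Perm.ofSubtype_apply_of_mem _ hy, Equiv.permCongr_apply]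
    simp [e, AddCircle.equivIco, ← AddCircle.coe_add, hyz, (toIcoMod_eq_self _).2 hz]
  refine ⟨ρ, ha, hb, u, le_rfl, le_rfl, fun y hy => ?_, fun y hy => ?_, fun y hy => ?_⟩
  · exact hρ y ⟨hy.1, by linarith [hy.2]⟩ _ ⟨by linarith [hy.1], by linarith [hy.2]⟩ rfl
  · refine hρ y ⟨by linarith [hy.1], by linarith [hy.2]⟩ _
      ⟨by linarith [hy.1], by linarith [hy.2]⟩ ?_
    rw [← AddCircle.coe_add_period (a + b) (y - a)]
    ring_nf
  · exact Equiv.Perm.ofSubtype_apply_of_not_mem _ (by rwa [← add_assoc])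

def RealizesSAF (p q : ℝ) (σ : Equiv.Perm ℝ) (ξ : ℝ ⊗[ℚ] ℝ) : Prop :=
  (∀ x ∉ Ico p q, σ x = x) ∧ HasSAF p q σ ξ

theorem RealizesSAF.isIET {p q : ℝ} {σ : Equiv.Perm ℝ} {ξ : ℝ ⊗[ℚ] ℝ}
    (h : RealizesSAF p q σ ξ) : IsIET p q σ := by
  obtain ⟨hout, n, pt, t, hpt, h0, hl, ht, -⟩ := h
  exact ⟨Equiv.Perm.bijOn_of_forall_notMem hout, hout, n, pt, hpt, h0, hl, fun i => ⟨t i, ht i⟩⟩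

theorem realizesSAF_one {u v : ℝ} (huv : u < v) : RealizesSAF u v 1 0 :=
  ⟨fun _ _ => rfl, by simpa using (HasSAF.nil v _).cons huv (t := 0) fun x _ => by simp⟩

theorem exists_realizesSAF_wedge_add {ξ : ℝ ⊗[ℚ] ℝ}
    (hξ : ∀ ⦃u v : ℝ⦄, u < v → ∃ τ, RealizesSAF u v τ ξ) (a b : ℝ) {u v : ℝ} (huv : u < v) :
    ∃ σ, RealizesSAF u v σ (wedge a b + ξ) := by
  rcases wedge_eq_zero_or_exists_pos a b (sub_pos.2 huv) with h0 | ⟨a, b, ha, hb, hab, h⟩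
  · simpa [h0] using hξ huv
  obtain ⟨ρ, -, -, x, hux, hxu, h₁, h₂, hρout⟩ := exists_perm_isRestrictedRotation u ha hb
  obtain rfl : x = u := by linarith
  obtain ⟨τ, hτout, hτ⟩ := hξ (show x + a + b < v by linarith)
  have hτ_fix : ∀ y ∈ Ico x (x + a + b), τ y = y := fun y hy =>
    hτout y fun h => (lt_irrefl _) (hy.2.trans_le h.1)
  have hρ_fix : ∀ y ∈ Ico (x + a + b) v, ρ (τ y) = τ y := fun y hy =>
    hρout _ fun h => (lt_irrefl _)
      (h.2.trans_le ((Equiv.Perm.bijOn_of_forall_notMem hτout).mapsTo hy).1)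
  refine ⟨ρ * τ, fun y hy => ?_, h ▸ HasSAF.wedge_add ha hb (fun y hy => ?_) (fun y hy => ?_)
    (hτ.congr fun y hy => (hρ_fix y hy).symm)⟩
  · rw [Equiv.Perm.mul_apply, hτout y fun h => hy ⟨by linarith [h.1], h.2⟩,
      hρout y fun h => hy ⟨h.1, by linarith [h.2]⟩]
  · rw [Equiv.Perm.mul_apply, hτ_fix y ⟨hy.1, by linarith [hy.2]⟩, h₁ y hy]
  · rw [Equiv.Perm.mul_apply, hτ_fix y ⟨by linarith [hy.1], hy.2⟩, h₂ y hy]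

theorem exists_realizesSAF_of_mem_span {ξ : ℝ ⊗[ℚ] ℝ}
    (hξ : ξ ∈ Submodule.span ℚ {z | ∃ a b, z = wedge a b}) {u v : ℝ} (huv : u < v) :
    ∃ σ, RealizesSAF u v σ ξ := by
  rw [← Submodule.mem_toAddSubmonoid, Submodule.span_eq_closure] at hξ
  induction hξ using AddSubmonoid.closure_induction_left generalizing u v with
  | zero => exact ⟨1, realizesSAF_one huv⟩
  | add_left _ hw _ _ ih =>
    obtain ⟨c, -, _, ⟨a, b, rfl⟩, rfl⟩ := hw
    simpa only [smul_wedge] using exists_realizesSAF_wedge_add (fun _ _ => ih) (c • a) b huv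

/-- An element `ξ ∈ ℝ ⊗[ℚ] ℝ` is the SAF invariant of some interval exchange
transformation of `[p, q)` if and only if it lies in `ℝ ∧[ℚ] ℝ`, the span of
the elements `a ⊗ b - b ⊗ a`. -/
theorem saf_range (p q : ℝ) (hpq : p < q) (ξ : ℝ ⊗[ℚ] ℝ) :
    (∃ f : ℝ → ℝ, IsIET p q f ∧ HasSAF p q f ξ) ↔
      ξ ∈ Submodule.span ℚ
        {z : ℝ ⊗[ℚ] ℝ | ∃ a b : ℝ, z = a ⊗ₜ[ℚ] b - b ⊗ₜ[ℚ] a} := by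
  constructor
  · rintro ⟨f, hf, hξ⟩
    exact TensorProduct.mem_span_of_add_comm_eq_zero (hξ.add_comm_eq_zero hf.1)
  · intro hξ
    obtain ⟨σ, hσ⟩ := exists_realizesSAF_of_mem_span hξ hpq
    exact ⟨σ, hσ.isIET, hσ.2⟩
end
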